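/- arXiv:2603.05736 — 2 statements merged into one kernel-verified Lean document; each statement's English description precedes it below -/
import Mathlib

section
/- Let k ≥ 1 be an integer, let n = 20k + 1 and s = n − 10. Then HOP(2^⟨s⟩, 4, 8, 8) has a solution, i.e., HOP(2^⟨s⟩, 2m_1, 2m_2, 2m_3) has a solution with (m_1, m_2, m_3) = (2, 4, 4). (In the paper this is stated as: 4K_n^• admits an HOP (C_2, C_4, C_4)-decomposition, which by the paper's Theorem 3.2 is equivalent to the stated HOP solution.) -/
/-- The vertex set of the complete graph `K_{2n}`: the `n` couples are indexed by `Fin n`,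
and the two members of a couple by `Fin 2`. -/
abbrev HOPVertex (n : ℕ) : Type := Fin n × Fin 2

/-- The spouse of a participant: the other member of the same couple. -/
def HOPspouse {n : ℕ} (v : HOPVertex n) : HOPVertex n := (v.1, v.2 + 1)

/-- An edge of `K_{2n}` is an `I`-edge (an edge of the distinguished perfect matching `I`)
if it joins a participant to their spouse. -/
def IsIEdge {n : ℕ} (e : Sym2 (HOPVertex n)) : Prop :=
  ∃ v, e = s(v, HOPspouse v)

/-- An `I`-alternating `(K_2^⟨s⟩, C_{2m_1}, …, C_{2m_t})`-factor of `K_{2n}`: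
a spanning subgraph of `K_{2n}` which is a vertex-disjoint union of `s` edges of `I`
(one for each `a : Fin s`, namely the edge joining `pair a` to its spouse) together with
`t` cycles, the `i`-th of which has length `2 * m i` (given by the cyclic vertex sequence
`cyc i : ZMod (2 * m i) → HOPVertex n`), such that along each cycle the edges alternate
between `I`-edges (at even positions) and non-`I`-edges (at odd positions).
The field `spanning` says that the listed vertices are pairwise distinct and exhaust the
whole vertex set; in particular each `cyc i` is injective, so it really traces a cycle. -/
structure HOPFactor (n s t : ℕ) (m : Fin t → ℕ) : Type where
  pair : Fin s → HOPVertex n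
  cyc : (i : Fin t) → ZMod (2 * m i) → HOPVertex n
  alt_even : ∀ (i : Fin t) (j : ZMod (2 * m i)),
      j.val % 2 = 0 → cyc i (j + 1) = HOPspouse (cyc i j)
  alt_odd : ∀ (i : Fin t) (j : ZMod (2 * m i)),
      j.val % 2 = 1 → ¬ IsIEdge s(cyc i j, cyc i (j + 1))
  spanning : Function.Bijective
      (Sum.elim
        (fun a : Fin s × Fin 2 => if a.2 = 0 then pair a.1 else HOPspouse (pair a.1))
        (fun x : (i : Fin t) × ZMod (2 * m i) => cyc x.1 x.2))

/-- The edge set of an `I`-alternating `(K_2^⟨s⟩, C_{2m_1}, …, C_{2m_t})`-factor. -/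
def HOPFactor.edges {n s t : ℕ} {m : Fin t → ℕ} (F : HOPFactor n s t m) :
    Set (Sym2 (HOPVertex n)) :=
  {e | (∃ a : Fin s, e = s(F.pair a, HOPspouse (F.pair a))) ∨
    ∃ (i : Fin t) (j : ZMod (2 * m i)), e = s(F.cyc i j, F.cyc i (j + 1))}

/-- A solution to the generalized Honeymoon Oberwolfach Problem
`HOP(2^⟨s⟩, 2 m_1, …, 2 m_t)`: a family of `γ` `I`-alternating
`(K_2^⟨s⟩, C_{2m_1}, …, C_{2m_t})`-factors of `K_{2n}`, where `γ` is the natural number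
with `γ * (m_1 + ⋯ + m_t) = 2n(n-1)`, such that every edge of `K_{2n}` that is not an
`I`-edge lies in exactly one factor of the family. -/
def HOPSolution (n s t : ℕ) (m : Fin t → ℕ) : Prop :=
  ∃ γ : ℕ, γ * (∑ i, m i) = 2 * n * (n - 1) ∧
    ∃ F : Fin γ → HOPFactor n s t m,
      ∀ e : Sym2 (HOPVertex n), ¬ e.IsDiag → ¬ IsIEdge e →
        ∃! k : Fin γ, e ∈ (F k).edges

/-!
The solution is cyclic. Identify the couples with `ℤ/n`, `n = 20k + 1`; the `4kn` factors are
the translates of `4k` base factors `(j, v)` with `j < k` and `v < 4`. Each base factor seats ten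
couples at one table of size 4 and two tables of size 8, and every non-spouse edge of it joins
two couples at distance `10j + c` with `1 ≤ c ≤ 10`. For fixed `j` the forty such edges of the
four base factors realise each `c` with each ordered pair of members at the two ends exactly
once, a finite check. As `n` is odd, every non-spouse edge of `K_{2n}` is uniquely of the form
`(X, a) — (X + d, b)` with `0 < d ≤ 10k`, so it lies in exactly one translate of exactly one
base factor.
-/

open Function

lemma isIEdge_mk_iff {n : ℕ} {P Q : HOPVertex n} :
    IsIEdge s(P, Q) ↔ P.1 = Q.1 ∧ P.2 ≠ Q.2 := by
  constructor
  · rintro ⟨w, hw⟩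
    rcases Sym2.eq_iff.1 hw with ⟨rfl, rfl⟩ | ⟨rfl, rfl⟩ <;>
      exact ⟨rfl, by simp [HOPspouse]⟩
  · rintro ⟨h1, h2⟩
    have h2' : Q.2 = P.2 + 1 := by omega
    exact ⟨P, by rw [show Q = HOPspouse P from Prod.ext h1.symm h2']⟩

namespace HOPFactor

variable {n s t : ℕ} {m : Fin t → ℕ}

def map (σ : HOPVertex n ≃ HOPVertex n) (hσ : ∀ v, σ (HOPspouse v) = HOPspouse (σ v))
    (F : HOPFactor n s t m) : HOPFactor n s t m where
  pair a := σ (F.pair a)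
  cyc i j := σ (F.cyc i j)
  alt_even i j h := by rw [F.alt_even i j h, hσ]
  alt_odd i j h := by
    rintro ⟨w, hw⟩
    refine F.alt_odd i j h ⟨σ.symm w, Sym2.map.injective σ.injective ?_⟩
    have hσ' : σ (HOPspouse (σ.symm w)) = HOPspouse w := by rw [hσ, σ.apply_symm_apply]
    simpa [hσ'] using hw
  spanning := by
    convert σ.bijective.comp F.spanning using 1
    ext (⟨a, b⟩ | x) <;> simp [apply_ite σ, hσ]

lemma mem_edges_map {σ : HOPVertex n ≃ HOPVertex n}
    {hσ : ∀ v, σ (HOPspouse v) = HOPspouse (σ v)} {F : HOPFactor n s t m}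
    {e : Sym2 (HOPVertex n)} :
    e ∈ (F.map σ hσ).edges ↔ e.map σ.symm ∈ F.edges := by
  have key : ∀ P Q, e = s(σ P, σ Q) ↔ e.map σ.symm = s(P, Q) := fun P Q => by
    constructor
    · rintro rfl
      simp
    · intro h
      rw [← Sym2.map_mk, ← h, Sym2.map_map]
      simp
  simp only [edges, map, Set.mem_ofPred_eq, ← hσ, key]

def translate [NeZero n] (r : Fin n) (F : HOPFactor n s t m) : HOPFactor n s t m :=
  F.map ((Equiv.addRight r).prodCongr (Equiv.refl _)) fun _ => Prod.ext rfl rfl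

lemma mk_mem_edges_translate [NeZero n] {r : Fin n} {F : HOPFactor n s t m} {X Y : Fin n}
    {a b : Fin 2} :
    s((X, a), (Y, b)) ∈ (F.translate r).edges ↔ s((X - r, a), (Y - r, b)) ∈ F.edges := by
  rw [translate, mem_edges_map]
  simp [sub_eq_add_neg]

end HOPFactor

section ShortEdges

variable {n : ℕ} [NeZero n]

lemma eq_of_mk_eq_mk_short {X X' d d' : Fin n} {a a' b b' : Fin 2}
    (hd : 0 < (d : ℕ)) (hd2 : 2 * (d : ℕ) < n)
    (hd' : 0 < (d' : ℕ)) (hd2' : 2 * (d' : ℕ) < n)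
    (h : s((X, a), (X + d, b)) = s((X', a'), (X' + d', b'))) :
    X = X' ∧ d = d' ∧ a = a' ∧ b = b' := by
  rcases Sym2.eq_iff.1 h with ⟨h1, h2⟩ | ⟨h1, h2⟩ <;> simp only [Prod.mk.injEq] at h1 h2
  · obtain ⟨rfl, rfl⟩ := h1
    exact ⟨rfl, add_left_cancel h2.1, rfl, h2.2⟩
  · have hsum : d' + d = 0 := by
      have := h2.1
      rw [h1.1, add_assoc] at this
      exact add_eq_left.1 this
    have := congrArg Fin.val hsum
    rw [Fin.val_add_eq_ite, Fin.val_zero] at this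
    split_ifs at this <;> omega

lemma not_isIEdge_mk_add {X d : Fin n} (hd : 0 < (d : ℕ)) (a b : Fin 2) :
    ¬ IsIEdge s((X, a), (X + d, b)) := fun h =>
  hd.ne' (by rw [left_eq_add.1 (isIEdge_mk_iff.1 h).1, Fin.val_zero])

lemma exists_mk_eq_mk_short (hn : Odd n) {P Q : HOPVertex n} (h : P.1 ≠ Q.1) :
    ∃ (X d : Fin n) (a b : Fin 2), 0 < (d : ℕ) ∧ 2 * (d : ℕ) < n ∧
      s(P, Q) = s((X, a), (X + d, b)) := by
  obtain ⟨r, rfl⟩ := hn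
  have hd : Q.1 - P.1 ≠ 0 := sub_ne_zero.2 h.symm
  have hpos : 0 < ((Q.1 - P.1 : Fin _) : ℕ) := Nat.pos_of_ne_zero (Fin.val_ne_iff.2 hd)
  have hlt := (Q.1 - P.1).isLt
  by_cases hshort : 2 * ((Q.1 - P.1 : Fin _) : ℕ) < 2 * r + 1
  · exact ⟨P.1, Q.1 - P.1, P.2, Q.2, hpos, hshort, by simp⟩
  · refine ⟨Q.1, -(Q.1 - P.1), Q.2, P.2, ?_, ?_, by rw [Sym2.eq_swap]; simp⟩ <;>
      rw [Fin.val_neg, if_neg hd] <;> omega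

end ShortEdges

/-- The analogue of a difference family in design theory. -/
def IsDifferenceFamily {n s t : ℕ} [NeZero n] {m : Fin t → ℕ} {ι : Type*}
    (B : ι → HOPFactor n s t m) : Prop :=
  ∀ d : Fin n, 0 < (d : ℕ) → 2 * (d : ℕ) < n → ∀ a b : Fin 2,
    ∃! p : ι × Sym2 (HOPVertex n), p.2 ∈ (B p.1).edges ∧ ∃ X, p.2 = s((X, a), (X + d, b))

lemma existsUnique_mem_edges_translate {n s t : ℕ} [NeZero n] {m : Fin t → ℕ} (hn : Odd n)
    {ι : Type*} (B : ι → HOPFactor n s t m)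
    (hB : IsDifferenceFamily B)
    {e : Sym2 (HOPVertex n)} (hdiag : ¬ e.IsDiag) (hI : ¬ IsIEdge e) :
    ∃! p : ι × Fin n, e ∈ ((B p.1).translate p.2).edges := by
  induction e using Sym2.ind with | _ P Q => ?_
  have hPQ : P.1 ≠ Q.1 := fun h =>
    hI (isIEdge_mk_iff.2 ⟨h, fun h' => hdiag (Sym2.mk_isDiag_iff.2 (Prod.ext h h'))⟩)
  obtain ⟨X, d, a, b, hd, hd2, hPQ⟩ := exists_mk_eq_mk_short hn hPQ
  obtain ⟨⟨i, e'⟩, ⟨he', X', rfl⟩, huniq⟩ := hB d hd hd2 a b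
  rw [hPQ]
  refine ⟨(i, X - X'), ?_, ?_⟩
  · beta_reduce
    rw [HOPFactor.mk_mem_edges_translate]
    convert he' using 3
    · exact sub_sub_cancel X X'
    · rw [add_sub_right_comm, sub_sub_cancel, add_comm]
  · rintro ⟨i', r'⟩ hmem
    rw [HOPFactor.mk_mem_edges_translate] at hmem
    have hpair := huniq (i', _) ⟨hmem, X - r', by rw [sub_add_eq_add_sub]⟩
    obtain ⟨rfl, hedge⟩ := Prod.mk.inj hpair
    rw [← sub_add_eq_add_sub] at hedge
    obtain ⟨hX, -⟩ := eq_of_mk_eq_mk_short hd hd2 hd hd2 hedge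
    rw [← hX, sub_sub_cancel]

theorem hopSolution_of_isDifferenceFamily {n s t : ℕ} [NeZero n] {m : Fin t → ℕ} (hn : Odd n)
    {ι : Type*} [Fintype ι] (B : ι → HOPFactor n s t m)
    (hcount : Fintype.card ι * n * ∑ i, m i = 2 * n * (n - 1))
    (hB : IsDifferenceFamily B) :
    HOPSolution n s t m := by
  let σ : ι × Fin n ≃ Fin (Fintype.card ι * n) := Fintype.equivFinOfCardEq (by simp)
  refine ⟨_, hcount, fun q => (B (σ.symm q).1).translate (σ.symm q).2, fun e hdiag hI => ?_⟩
  exact σ.existsUnique_congr_left.1 (existsUnique_mem_edges_translate hn B hB hdiag hI)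

section Seating

variable {M : ℕ}

lemma val_finRotate (q : Fin M) : (finRotate M q : ℕ) = ((q : ℕ) + 1) % M := by
  obtain ⟨M, rfl⟩ : ∃ M', M = M' + 1 := ⟨M - 1, by have := q.pos; omega⟩
  rw [coe_finRotate]
  split_ifs with h
  · rw [h, Fin.val_last, Nat.mod_self]
  · rw [Nat.mod_eq_of_lt (by have := Fin.val_lt_last h; omega)]

lemma finRotate_ne_self (hM : 2 ≤ M) (q : Fin M) : finRotate M q ≠ q := by
  rw [ne_eq, Fin.ext_iff, val_finRotate]
  rcases Nat.lt_or_ge ((q : ℕ) + 1) M with h | h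
  · rw [Nat.mod_eq_of_lt h]
    omega
  · rw [show (q : ℕ) + 1 = M by omega, Nat.mod_self]
    omega

lemma val_add_one_eq_mod (hM : 1 < M) (z : ZMod M) : (z + 1).val = (z.val + 1) % M := by
  have : Fact (1 < M) := ⟨hM⟩
  rw [ZMod.val_add, ZMod.val_one]

/-- Around a table of `M` couples, person `z` belongs to the couple at seat `z / 2`, as its
member `tableMember z`. -/
def tableSeat (hM : 0 < M) (z : ZMod (2 * M)) : Fin M :=
  ⟨z.val / 2, by have : NeZero (2 * M) := ⟨by omega⟩; have := ZMod.val_lt z; omega⟩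

def tableMember (z : ZMod (2 * M)) : Fin 2 := ⟨z.val % 2, Nat.mod_lt _ two_pos⟩

lemma tableMember_add_one (hM : 0 < M) (z : ZMod (2 * M)) :
    tableMember (z + 1) = tableMember z + 1 := by
  ext
  simp only [tableMember, Fin.val_add, val_add_one_eq_mod (by omega : 1 < 2 * M),
    Nat.mod_mod_of_dvd _ (dvd_mul_right 2 M)]
  omega

lemma tableSeat_add_one_of_even (hM : 0 < M) {z : ZMod (2 * M)} (h : z.val % 2 = 0) :
    tableSeat hM (z + 1) = tableSeat hM z := by
  have : NeZero (2 * M) := ⟨by omega⟩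
  have := ZMod.val_lt z
  ext
  simp only [tableSeat, val_add_one_eq_mod (by omega : 1 < 2 * M)]
  rw [Nat.mod_eq_of_lt (by omega)]
  omega

lemma tableSeat_add_one_of_odd (hM : 0 < M) {z : ZMod (2 * M)} (h : z.val % 2 = 1) :
    tableSeat hM (z + 1) = finRotate M (tableSeat hM z) := by
  have : NeZero (2 * M) := ⟨by omega⟩
  have := ZMod.val_lt z
  ext
  simp only [tableSeat, val_add_one_eq_mod (by omega : 1 < 2 * M), val_finRotate]
  rcases Nat.lt_or_ge (z.val + 1) (2 * M) with hlt | hge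
  · rw [Nat.mod_eq_of_lt hlt, Nat.mod_eq_of_lt (by omega)]
    omega
  · rw [show z.val + 1 = 2 * M by omega, show z.val / 2 + 1 = M by omega, Nat.mod_self,
      Nat.mod_self]

lemma eq_of_tableSeat_eq (hM : 0 < M) {z z' : ZMod (2 * M)}
    (hs : tableSeat hM z = tableSeat hM z') (hm : tableMember z = tableMember z') : z = z' := by
  have : NeZero (2 * M) := ⟨by omega⟩
  simp only [tableSeat, tableMember, Fin.mk.injEq] at hs hm
  exact ZMod.val_injective _ (by omega)

lemma exists_tableSeat_eq (hM : 0 < M) (q : Fin M) :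
    ∃ z : ZMod (2 * M), z.val % 2 = 1 ∧ tableSeat hM z = q := by
  have : NeZero (2 * M) := ⟨by omega⟩
  have hval : ((2 * q + 1 : ℕ) : ZMod (2 * M)).val = 2 * q + 1 :=
    ZMod.val_cast_of_lt (by omega)
  exact ⟨(2 * q + 1 : ℕ), by omega, Fin.ext (by simp only [tableSeat, hval]; omega)⟩

end Seating

section Placement

variable {n s t : ℕ} {m : Fin t → ℕ}

def nextSeat (x : (i : Fin t) × Fin (m i)) : (i : Fin t) × Fin (m i) :=
  ⟨x.1, finRotate _ x.2⟩

def freeCouples (c : ((i : Fin t) × Fin (m i)) → Fin n) : Finset (Fin n) :=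
  (Finset.univ.image c)ᶜ

lemma card_freeCouples {c : ((i : Fin t) × Fin (m i)) → Fin n} (hc : Injective c)
    (hs : s + ∑ i, m i = n) : (freeCouples c).card = s := by
  rw [freeCouples, Finset.card_compl, Finset.card_image_of_injective _ hc, Finset.card_univ,
    Fintype.card_sigma]
  simp only [Fintype.card_fin]
  omega

def freeCouple {c : ((i : Fin t) × Fin (m i)) → Fin n} (hc : Injective c)
    (hs : s + ∑ i, m i = n) (a : Fin s) : Fin n :=
  (freeCouples c).orderIsoOfFin (card_freeCouples hc hs) a

lemma freeCouple_injective {c : ((i : Fin t) × Fin (m i)) → Fin n} (hc : Injective c)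
    (hs : s + ∑ i, m i = n) : Injective (freeCouple hc hs) :=
  Subtype.val_injective.comp (OrderIso.injective _)

lemma freeCouple_ne {c : ((i : Fin t) × Fin (m i)) → Fin n} (hc : Injective c)
    (hs : s + ∑ i, m i = n) (a : Fin s) (x : (i : Fin t) × Fin (m i)) :
    freeCouple hc hs a ≠ c x := fun h => by
  have hmem := ((freeCouples c).orderIsoOfFin (card_freeCouples hc hs) a).2
  rw [freeCouple] at h
  rw [h] at hmem
  simp [freeCouples] at hmem

variable (c : ((i : Fin t) × Fin (m i)) → Fin n) (ℓ : ((i : Fin t) × Fin (m i)) → Fin 2)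
  (hm : ∀ i, 2 ≤ m i)

/-- The couple `c x` sits at seat `x`, its member `ℓ x` facing the previous seat. -/
def placementVertex (i : Fin t) (z : ZMod (2 * m i)) : HOPVertex n :=
  (c ⟨i, tableSeat (two_pos.trans_le (hm i)) z⟩,
    ℓ ⟨i, tableSeat (two_pos.trans_le (hm i)) z⟩ + tableMember z)

def placementEdge (x : (i : Fin t) × Fin (m i)) : Sym2 (HOPVertex n) :=
  s((c x, ℓ x + 1), (c (nextSeat x), ℓ (nextSeat x)))

lemma placementVertex_add_one_of_even {i : Fin t} {z : ZMod (2 * m i)} (h : z.val % 2 = 0) :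
    placementVertex c ℓ hm i (z + 1) = HOPspouse (placementVertex c ℓ hm i z) := by
  simp only [placementVertex, HOPspouse, tableSeat_add_one_of_even _ h,
    tableMember_add_one (two_pos.trans_le (hm i)), add_assoc]

lemma mk_placementVertex_add_one_of_odd {i : Fin t} {z : ZMod (2 * m i)} (h : z.val % 2 = 1) :
    s(placementVertex c ℓ hm i z, placementVertex c ℓ hm i (z + 1))
      = placementEdge c ℓ ⟨i, tableSeat (two_pos.trans_le (hm i)) z⟩ := by
  have hmem : tableMember z = 1 := Fin.ext h
  simp only [placementVertex, placementEdge, nextSeat, tableSeat_add_one_of_odd _ h,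
    tableMember_add_one (two_pos.trans_le (hm i)), hmem]
  rw [show (1 + 1 : Fin 2) = 0 from rfl, add_zero]

variable {c ℓ hm}

lemma placementVertex_injective (hc : Injective c) :
    Injective fun x : (i : Fin t) × ZMod (2 * m i) => placementVertex c ℓ hm x.1 x.2 := by
  rintro ⟨i, z⟩ ⟨i', z'⟩ h
  simp only [placementVertex, Prod.mk.injEq] at h
  obtain ⟨rfl, hseat⟩ := Sigma.mk.inj (hc h.1)
  rw [eq_of_tableSeat_eq _ (eq_of_heq hseat) (add_left_cancel (eq_of_heq hseat ▸ h.2))]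

lemma bijective_placement (hc : Injective c) (hs : s + ∑ i, m i = n) :
    Bijective (Sum.elim
      (fun a : Fin s × Fin 2 => if a.2 = 0 then (freeCouple hc hs a.1, 0)
        else HOPspouse (freeCouple hc hs a.1, 0))
      (fun x : (i : Fin t) × ZMod (2 * m i) => placementVertex c ℓ hm x.1 x.2)) := by
  have : ∀ i, NeZero (2 * m i) := fun i => ⟨by have := hm i; omega⟩
  have hpair : ∀ (X : Fin n) (b : Fin 2),
      (if b = 0 then (X, 0) else HOPspouse (X, 0)) = (X, b) := by
    intro X b
    fin_cases b <;> rfl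
  simp only [hpair]
  rw [Fintype.bijective_iff_injective_and_card]
  refine ⟨?_, ?_⟩
  · rintro (⟨a, b⟩ | ⟨i, z⟩) (⟨a', b'⟩ | ⟨i', z'⟩) h <;>
      simp only [Sum.elim_inl, Sum.elim_inr, Prod.mk.injEq] at h
    · rw [freeCouple_injective hc hs h.1, h.2]
    · exact (freeCouple_ne hc hs a _ (congrArg Prod.fst h)).elim
    · exact (freeCouple_ne hc hs a' _ (congrArg Prod.fst h).symm).elim
    · exact congrArg Sum.inr (placementVertex_injective hc h)
  · simp only [Fintype.card_sum, Fintype.card_prod, Fintype.card_sigma, Fintype.card_fin,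
      ZMod.card, ← Finset.mul_sum, ← hs]
    ring

def HOPFactor.ofPlacement (c : ((i : Fin t) × Fin (m i)) → Fin n)
    (ℓ : ((i : Fin t) × Fin (m i)) → Fin 2) (hm : ∀ i, 2 ≤ m i) (hc : Injective c)
    (hs : s + ∑ i, m i = n) : HOPFactor n s t m where
  pair a := (freeCouple hc hs a, 0)
  cyc := placementVertex c ℓ hm
  alt_even _ _ h := placementVertex_add_one_of_even c ℓ hm h
  alt_odd i z h := by
    rw [mk_placementVertex_add_one_of_odd c ℓ hm h, placementEdge, isIEdge_mk_iff]
    exact fun h' => finRotate_ne_self (hm i) _ (by simpa [nextSeat] using hc h'.1.symm)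
  spanning := bijective_placement hc hs

lemma mem_edges_ofPlacement_iff {hc : Injective c} {hs : s + ∑ i, m i = n}
    {e : Sym2 (HOPVertex n)} (he : ¬ IsIEdge e) :
    e ∈ (HOPFactor.ofPlacement c ℓ hm hc hs).edges ↔ ∃ x, e = placementEdge c ℓ x := by
  constructor
  · rintro (⟨a, rfl⟩ | ⟨i, z, rfl⟩)
    · exact (he ⟨_, rfl⟩).elim
    · rcases Nat.mod_two_eq_zero_or_one z.val with h | h
      · refine (he ⟨placementVertex c ℓ hm i z, ?_⟩).elim
        rw [← placementVertex_add_one_of_even c ℓ hm h]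
        rfl
      · exact ⟨_, mk_placementVertex_add_one_of_odd c ℓ hm h⟩
  · rintro ⟨⟨i, q⟩, rfl⟩
    obtain ⟨z, hz, rfl⟩ := exists_tableSeat_eq (two_pos.trans_le (hm i)) q
    exact Or.inr ⟨i, z, (mk_placementVertex_add_one_of_odd c ℓ hm hz).symm⟩

end Placement

namespace HOP244

abbrev Seat : Type := (i : Fin 3) × Fin (![2, 4, 4] i)

def weight (x : Seat) : ℕ :=
  ([[1, 2], [0, 1, 2, 1], [0, 1, 2, 1]] : List (List ℕ)).getD x.1 [] |>.getD x.2 0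

def baseOffset (v : Fin 4) (x : Seat) : ℕ :=
  ([[4, 13 + (v : ℕ) / 2], [0, 1, 5, 3], [2, 7, 15, 8]] : List (List ℕ)).getD x.1 []
    |>.getD x.2 0

def label (v : Fin 4) (x : Seat) : Fin 2 :=
  ([[[0, 0], [0, 0, 0, 0], [0, 0, 0, 0]],
    [[0, 1], [1, 1, 1, 1], [1, 1, 1, 1]],
    [[0, 0], [0, 1, 0, 1], [0, 1, 0, 1]],
    [[0, 1], [1, 0, 1, 0], [1, 0, 1, 0]]] : List (List (List (Fin 2)))).getD v []
    |>.getD x.1 [] |>.getD x.2 0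

def offset (j : ℕ) (v : Fin 4) (x : Seat) : ℕ := 10 * j * weight x + baseOffset v x

/-- The edge of the base factor `(j, v)` leaving seat `x` has length `10 j + (edgeType v x).1`,
and `(edgeType v x).2` are the members at its lower and upper end. -/
def edgeType (v : Fin 4) (x : Seat) : ℕ × Fin 2 × Fin 2 :=
  if baseOffset v x < baseOffset v (nextSeat x) then
    (baseOffset v (nextSeat x) - baseOffset v x, label v x + 1, label v (nextSeat x))
  else (baseOffset v x - baseOffset v (nextSeat x), label v (nextSeat x), label v x + 1)

lemma weight_le (x : Seat) : weight x ≤ 2 := by revert x; decide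

lemma baseOffset_le (v : Fin 4) (x : Seat) : baseOffset v x ≤ 15 := by revert v x; decide

lemma baseOffset_injective (v : Fin 4) : Injective (baseOffset v) := by revert v; decide

lemma baseOffset_lt_of_weight_lt (v : Fin 4) {x y : Seat} (h : weight x < weight y) :
    baseOffset v x < baseOffset v y + 10 := by
  revert v x y; decide

lemma weight_nextSeat (v : Fin 4) (x : Seat) :
    (baseOffset v x < baseOffset v (nextSeat x) ∧ weight (nextSeat x) = weight x + 1) ∨
      (baseOffset v (nextSeat x) < baseOffset v x ∧ weight x = weight (nextSeat x) + 1) := by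
  revert v x; decide

lemma edgeType_injective : Injective fun p : Fin 4 × Seat => edgeType p.1 p.2 := by decide

lemma image_edgeType :
    Finset.univ.image (fun p : Fin 4 × Seat => edgeType p.1 p.2)
      = Finset.Icc 1 10 ×ˢ Finset.univ := by
  decide

lemma edgeType_fst_mem (v : Fin 4) (x : Seat) : (edgeType v x).1 ∈ Finset.Icc 1 10 :=
  (Finset.mem_product.1 (image_edgeType ▸ Finset.mem_image_of_mem _ (Finset.mem_univ (v, x)))).1

lemma offset_lt {j k : ℕ} (hj : j < k) (v : Fin 4) (x : Seat) : offset j v x < 20 * k + 1 := by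
  have := Nat.mul_le_mul_left (10 * j) (weight_le x)
  have := baseOffset_le v x
  rw [offset]
  omega

lemma weight_le_of_offset_eq {j : ℕ} (hj : 0 < j) {v : Fin 4} {x y : Seat}
    (h : offset j v x = offset j v y) : weight x ≤ weight y := by
  by_contra! hlt
  have := Nat.mul_le_mul_left (10 * j) hlt
  have := baseOffset_lt_of_weight_lt v hlt
  rw [offset, offset] at h
  rw [Nat.mul_succ] at *
  omega

lemma offset_injective (j : ℕ) (v : Fin 4) : Injective (offset j v) := by
  intro x y h
  obtain rfl | hj := Nat.eq_zero_or_pos j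
  · exact baseOffset_injective v (by simpa [offset] using h)
  · have hw := le_antisymm (weight_le_of_offset_eq hj h) (weight_le_of_offset_eq hj h.symm)
    exact baseOffset_injective v (by simpa [offset, hw] using h)

def couple {k : ℕ} (j : Fin k) (v : Fin 4) (x : Seat) : Fin (20 * k + 1) :=
  ⟨offset j v x, offset_lt j.2 v x⟩

lemma couple_injective {k : ℕ} (j : Fin k) (v : Fin 4) : Injective (couple j v) :=
  fun _ _ h => offset_injective j v (Fin.val_eq_of_eq h)

lemma exists_placementEdge_eq {k : ℕ} (j : Fin k) (v : Fin 4) (x : Seat) :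
    ∃ (X δ : Fin (20 * k + 1)), (δ : ℕ) = 10 * j + (edgeType v x).1 ∧
      placementEdge (couple j v) (label v) x
        = s((X, (edgeType v x).2.1), (X + δ, (edgeType v x).2.2)) := by
  have hstep := Finset.mem_Icc.1 (edgeType_fst_mem v x)
  have hj := j.2
  have hlt := offset_lt j.2 v x
  have hlt' := offset_lt j.2 v (nextSeat x)
  rcases weight_nextSeat v x with ⟨hb, hw⟩ | ⟨hb, hw⟩
  · rw [edgeType, if_pos hb] at hstep ⊢
    refine ⟨couple j v x, ⟨10 * j + (baseOffset v (nextSeat x) - baseOffset v x), by omega⟩,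
      rfl, ?_⟩
    rw [placementEdge]
    congr 3
    rw [Fin.ext_iff]
    simp only [couple, offset, hw, Fin.val_add, Nat.mul_succ] at hlt' ⊢
    rw [Nat.mod_eq_of_lt (by omega)]
    omega
  · rw [edgeType, if_neg hb.not_gt] at hstep ⊢
    refine ⟨couple j v (nextSeat x), ⟨10 * j + (baseOffset v x - baseOffset v (nextSeat x)),
      by omega⟩, rfl, ?_⟩
    rw [placementEdge, Sym2.eq_swap]
    congr 3
    rw [Fin.ext_iff]
    simp only [couple, offset, hw, Fin.val_add, Nat.mul_succ] at hlt ⊢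
    rw [Nat.mod_eq_of_lt (by omega)]
    omega

lemma exists_placementEdge_eq_mk_iff {k : ℕ} {d : Fin (20 * k + 1)} (hd : 0 < (d : ℕ))
    (hd2 : 2 * (d : ℕ) < 20 * k + 1) {a b : Fin 2} (j : Fin k) (v : Fin 4) (x : Seat) :
    (∃ X, placementEdge (couple j v) (label v) x = s((X, a), (X + d, b))) ↔
      (d : ℕ) = 10 * j + (edgeType v x).1 ∧ (edgeType v x).2 = (a, b) := by
  obtain ⟨X', δ, hδ, hE⟩ := exists_placementEdge_eq j v x
  have hstep := Finset.mem_Icc.1 (edgeType_fst_mem v x)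
  have hj := j.2
  rw [hE]
  constructor
  · rintro ⟨X, h⟩
    obtain ⟨-, rfl, ha, hb⟩ := eq_of_mk_eq_mk_short (by omega) (by omega) hd hd2 h
    exact ⟨hδ, Prod.ext ha hb⟩
  · rintro ⟨hdδ, hab⟩
    obtain rfl : δ = d := Fin.ext (hδ.trans hdδ.symm)
    exact ⟨X', by rw [hab]⟩

def baseFactor (k : ℕ) (p : Fin k × Fin 4) :
    HOPFactor (20 * k + 1) (20 * k + 1 - 10) 3 ![2, 4, 4] :=
  .ofPlacement (couple p.1 p.2) (label p.2) (by decide) (couple_injective p.1 p.2)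
    (by have := p.1.2; simp [Fin.sum_univ_three]; omega)

lemma mem_edges_baseFactor_and_eq_mk_iff {k : ℕ} {d : Fin (20 * k + 1)} (hd : 0 < (d : ℕ))
    (hd2 : 2 * (d : ℕ) < 20 * k + 1) {a b : Fin 2} (p : Fin k × Fin 4)
    (e : Sym2 (HOPVertex (20 * k + 1))) :
    (e ∈ (baseFactor k p).edges ∧ ∃ X, e = s((X, a), (X + d, b))) ↔
      ∃ x, e = placementEdge (couple p.1 p.2) (label p.2) x ∧
        (d : ℕ) = 10 * p.1 + (edgeType p.2 x).1 ∧ (edgeType p.2 x).2 = (a, b) := by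
  constructor
  · rintro ⟨he, X, rfl⟩
    obtain ⟨x, hx⟩ := (mem_edges_ofPlacement_iff (not_isIEdge_mk_add hd a b)).1 he
    exact ⟨x, hx, (exists_placementEdge_eq_mk_iff hd hd2 p.1 p.2 x).1 ⟨X, hx.symm⟩⟩
  · rintro ⟨x, rfl, h⟩
    obtain ⟨X, hX⟩ := (exists_placementEdge_eq_mk_iff hd hd2 p.1 p.2 x).2 h
    exact ⟨(mem_edges_ofPlacement_iff (hX ▸ not_isIEdge_mk_add hd a b)).2 ⟨x, rfl⟩, X, hX⟩

lemma isDifferenceFamily_baseFactor (k : ℕ) : IsDifferenceFamily (baseFactor k) := by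
  intro d hd hd2 a b
  simp only [mem_edges_baseFactor_and_eq_mk_iff hd hd2]
  -- the edges of length `d` belong to the base factors with `j = (d - 1) / 10`
  have hmem : (((d : ℕ) - 1) % 10 + 1, a, b) ∈
      Finset.univ.image fun p : Fin 4 × Seat => edgeType p.1 p.2 := by
    rw [image_edgeType]
    simp only [Finset.mem_product, Finset.mem_Icc, Finset.mem_univ, and_true]
    omega
  obtain ⟨⟨v₀, x₀⟩, -, h₀⟩ := Finset.mem_image.1 hmem
  let j₀ : Fin k := ⟨((d : ℕ) - 1) / 10, by omega⟩
  refine ⟨((j₀, v₀), placementEdge (couple j₀ v₀) (label v₀) x₀),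
    ⟨x₀, rfl, ?_, ?_⟩, ?_⟩
  · simp only [h₀, j₀]
    omega
  · simp only [h₀]
  rintro ⟨⟨j, v⟩, e⟩ ⟨x, he, hdx, hab⟩
  dsimp only at he hdx hab
  subst he
  have hstep := Finset.mem_Icc.1 (edgeType_fst_mem v x)
  obtain rfl : j = j₀ := Fin.ext (by simp only [j₀]; omega)
  obtain ⟨rfl, rfl⟩ := Prod.mk.inj (edgeType_injective (a₁ := (v, x)) (a₂ := (v₀, x₀))
    (Prod.ext (by simp only [h₀]; omega) (by simp only [h₀, hab])))
  rfl

end HOP244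

theorem hop_C2_C4_C4_mod_one_general (k n s : ℕ) (hn : n = 20 * k + 1)
    (hs : s = n - 10) :
    HOPSolution n s 3 ![2, 4, 4] := by
  subst hn hs
  refine hopSolution_of_isDifferenceFamily ⟨10 * k, by ring⟩ (HOP244.baseFactor k) ?_
    (HOP244.isDifferenceFamily_baseFactor k)
  simp [Fin.sum_univ_three]
  ring

/-- Lemma 6.9: for `k ≥ 1`, `n = 20k + 1` and `s = n - 10`,
`HOP(2^⟨s⟩, 4, 8, 8)` has a solution. -/
theorem hop_C2_C4_C4_mod_one (k n s : ℕ) (hk : 1 ≤ k) (hn : n = 20 * k + 1)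
    (hs : s = n - 10) :
    HOPSolution n s 3 ![2, 4, 4] :=
  hop_C2_C4_C4_mod_one_general k n s hn hs
end

section
/- Let k ≥ 1 be an integer, let n = 20k + 5 and s = n − 10. Then HOP(2^⟨s⟩, 4, 8, 8) has a solution, i.e., HOP(2^⟨s⟩, 2m_1, 2m_2, 2m_3) has a solution with (m_1, m_2, m_3) = (2, 4, 4). (In the paper this is stated as: 4K_n^• admits an HOP (C_2, C_4, C_4)-decomposition, which by the paper's Theorem 3.2 is equivalent to the stated HOP solution.) -/
namespace HOP612

instance (i : Fin 3) : NeZero (2 * ![2,4,4] i) := by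
  fin_cases i <;> exact ⟨by norm_num⟩

/-- label in `Fin 2` from parity -/
def lab (m : ℕ) : Fin 2 := ⟨m % 2, Nat.mod_lt _ (by norm_num)⟩

def off : Fin 3 → ℕ := ![0, 2, 6]

/-- couple-slot index of position `j` on cycle `i` -/
def tIdx (i : Fin 3) (j : ZMod (2 * ![2,4,4] i)) : Fin 10 :=
  ⟨off i + j.val / 2, by
    have h := ZMod.val_lt j
    fin_cases i <;> simp [off] at h ⊢ <;> omega⟩

variable {n : ℕ}

/-- the cycles of a template factor -/
def cycF (g : Fin 10 → Fin n) (y : Fin 10 → Fin 2) (i : Fin 3)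
    (j : ZMod (2 * ![2,4,4] i)) : HOPVertex n :=
  (g (tIdx i j), y (tIdx i j) + lab j.val)

lemma lab_succ_even {m : ℕ} (h : m % 2 = 0) : lab (m+1) = lab m + 1 := by
  simp only [lab, Fin.add_def]; congr 1; omega

lemma isIEdge_fst {a b : HOPVertex n} (h : IsIEdge s(a,b)) : a.1 = b.1 := by
  obtain ⟨v, hv⟩ := h
  rw [Sym2.eq_iff] at hv
  rcases hv with ⟨h1, h2⟩ | ⟨h1, h2⟩ <;> subst h1 <;> subst h2 <;> simp [HOPspouse]

lemma key_even : ∀ (i : Fin 3) (j : ZMod (2 * ![2,4,4] i)),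
    j.val % 2 = 0 → (j+1).val = j.val + 1 := by
  intro i; fin_cases i <;> decide

lemma key_odd : ∀ (i : Fin 3) (j : ZMod (2 * ![2,4,4] i)),
    j.val % 2 = 1 → tIdx i (j+1) ≠ tIdx i j := by
  intro i; fin_cases i <;> decide

lemma cycF_alt_even (g : Fin 10 → Fin n) (y : Fin 10 → Fin 2) (i : Fin 3)
    (j : ZMod (2 * ![2,4,4] i)) (h : j.val % 2 = 0) :
    cycF g y i (j+1) = HOPspouse (cycF g y i j) := by
  have hv := key_even i j h
  have ht : tIdx i (j+1) = tIdx i j := by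
    simp only [tIdx, hv]; congr 1; omega
  simp only [cycF, HOPspouse, ht, hv, lab_succ_even h]
  exact Prod.ext rfl (add_assoc _ _ _).symm

lemma cycF_alt_odd (g : Fin 10 → Fin n) (hg : Function.Injective g)
    (y : Fin 10 → Fin 2) (i : Fin 3)
    (j : ZMod (2 * ![2,4,4] i)) (h : j.val % 2 = 1) :
    ¬ IsIEdge s(cycF g y i j, cycF g y i (j+1)) := by
  intro hI
  exact key_odd i j h (hg (isIEdge_fst hI).symm)

lemma key_inj : ∀ (x x' : (i : Fin 3) × ZMod (2 * ![2,4,4] i)),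
    tIdx x.1 x.2 = tIdx x'.1 x'.2 → x.2.val % 2 = x'.2.val % 2 → x = x' := by
  decide

/-- the active-vertex part of the spanning map is injective -/
lemma cycF_inj (g : Fin 10 → Fin n) (hg : Function.Injective g) (y : Fin 10 → Fin 2) :
    Function.Injective (fun x : (i : Fin 3) × ZMod (2 * ![2,4,4] i) => cycF g y x.1 x.2) := by
  intro x x' h
  simp only [cycF, Prod.mk.injEq] at h
  have ht : tIdx x.1 x.2 = tIdx x'.1 x'.2 := hg h.1
  have hl : lab x.2.val = lab x'.2.val := by
    have := h.2; rw [ht] at this; exact add_left_cancel this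
  have : x.2.val % 2 = x'.2.val % 2 := by
    simpa [lab, Fin.ext_iff] using hl
  exact key_inj x x' ht this


/-- Build a HOP factor from 10 distinct "active couples" `g` (C2 on slots 0,1;
4-cycles on slots 2-5 and 6-9) together with labels `y`. -/
noncomputable def mkFactor (n : ℕ) (hn : 10 ≤ n) (g : Fin 10 → Fin n)
    (hg : Function.Injective g) (y : Fin 10 → Fin 2) :
    HOPFactor n (n - 10) 3 ![2,4,4] := by
  classical
  set S : Finset (Fin n) := Finset.image g Finset.univ with hS
  have hcardS : S.card = 10 := by
    rw [hS, Finset.card_image_of_injective _ hg, Finset.card_univ, Fintype.card_fin]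
  have hcardC : (Sᶜ : Finset (Fin n)).card = n - 10 := by
    rw [Finset.card_compl, hcardS, Fintype.card_fin]
  let eqv : {x // x ∈ Sᶜ} ≃ Fin (n - 10) := (Sᶜ).equivFin.trans (finCongr hcardC)
  refine ⟨fun a => (((eqv.symm a : {x // x ∈ Sᶜ}) : Fin n), 0), cycF g y,
    fun i j h => cycF_alt_even g y i j h,
    fun i j h => cycF_alt_odd g hg y i j h, ?_⟩
  rw [Fintype.bijective_iff_injective_and_card]
  constructor
  · intro u v huv
    have hleft : ∀ (a : Fin (n-10) × Fin 2),
        (if a.2 = 0 then (((eqv.symm a.1 : {x // x ∈ Sᶜ}) : Fin n), (0:Fin 2))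
          else HOPspouse (((eqv.symm a.1 : {x // x ∈ Sᶜ}) : Fin n), (0:Fin 2)))
          = (((eqv.symm a.1 : {x // x ∈ Sᶜ}) : Fin n), a.2) := by
      intro a
      rcases a with ⟨a1, a2⟩
      fin_cases a2 <;> simp [HOPspouse]
    match u, v with
    | .inl a, .inl b =>
      simp only [Sum.elim_inl, hleft] at huv
      have h1 : ((eqv.symm a.1 : {x // x ∈ Sᶜ}) : Fin n) = ((eqv.symm b.1 : {x // x ∈ Sᶜ}) : Fin n) :=
        congrArg Prod.fst huv
      have h2 := congrArg Prod.snd huv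
      have h3 : a.1 = b.1 := eqv.symm.injective (Subtype.ext h1)
      simp only at h2
      cases a; cases b; simp_all
    | .inl a, .inr x =>
      exfalso
      simp only [Sum.elim_inl, Sum.elim_inr, hleft] at huv
      have h1 : ((eqv.symm a.1 : {x // x ∈ Sᶜ}) : Fin n) = g (tIdx x.1 x.2) := by
        have := congrArg Prod.fst huv; simpa [cycF] using this
      have hmem := (eqv.symm a.1).2
      rw [Finset.mem_compl] at hmem
      exact hmem (h1 ▸ Finset.mem_image_of_mem g (Finset.mem_univ _))
    | .inr x, .inl a =>
      exfalso
      simp only [Sum.elim_inl, Sum.elim_inr, hleft] at huv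
      have h1 : ((eqv.symm a.1 : {x // x ∈ Sᶜ}) : Fin n) = g (tIdx x.1 x.2) := by
        have := congrArg Prod.fst huv; simpa [cycF] using this.symm
      have hmem := (eqv.symm a.1).2
      rw [Finset.mem_compl] at hmem
      exact hmem (h1 ▸ Finset.mem_image_of_mem g (Finset.mem_univ _))
    | .inr x, .inr x' =>
      simp only [Sum.elim_inr] at huv
      exact congrArg Sum.inr (cycF_inj g hg y huv)
  · have h4 : (2 * ![2,4,4] (0:Fin 3)) = 4 := rfl
    have h8 : (2 * ![2,4,4] (1:Fin 3)) = 8 := rfl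
    have h8' : (2 * ![2,4,4] (2:Fin 3)) = 8 := rfl
    simp only [Fintype.card_sum, Fintype.card_prod, Fintype.card_fin, Fintype.card_sigma,
      Fin.sum_univ_three, ZMod.card, h4, h8, h8']
    omega

/-- second endpoint slot of covered edge `t` -/
def sB : Fin 10 → Fin 10 := ![1,0,3,4,5,2,7,8,9,6]

/-- the `t`-th non-`I` edge covered by the template factor -/
def covered (g : Fin 10 → Fin n) (y : Fin 10 → Fin 2) (t : Fin 10) :
    Sym2 (HOPVertex n) :=
  s((g t, y t + 1), (g (sB t), y (sB t)))

lemma lab_eq_one {m : ℕ} (h : m % 2 = 1) : lab m = 1 := by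
  simp [lab, Fin.ext_iff, h]

lemma key_odd_slot : ∀ (i : Fin 3) (j : ZMod (2 * ![2,4,4] i)),
    j.val % 2 = 1 → sB (tIdx i j) = tIdx i (j+1) ∧ (j+1).val % 2 = 0 := by
  intro i; fin_cases i <;> decide

lemma cyc_edge_eq_covered (g : Fin 10 → Fin n) (y : Fin 10 → Fin 2) (i : Fin 3)
    (j : ZMod (2 * ![2,4,4] i)) (h : j.val % 2 = 1) :
    s(cycF g y i j, cycF g y i (j+1)) = covered g y (tIdx i j) := by
  obtain ⟨h1, h2⟩ := key_odd_slot i j h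
  simp only [covered, cycF, h1, lab_eq_one h]
  congr 2
  simp [lab, h2]

def itab : Fin 10 → Fin 3 := ![0,0,1,1,1,1,2,2,2,2]

lemma key_slot_cyc : ∀ t : Fin 10, ∃ j : ZMod (2 * ![2,4,4] (itab t)),
    j.val % 2 = 1 ∧ tIdx (itab t) j = t := by
  decide

lemma mem_edges_iff {nn : ℕ} (hn : 10 ≤ nn) (g : Fin 10 → Fin nn)
    (hg : Function.Injective g) (y : Fin 10 → Fin 2)
    (e : Sym2 (HOPVertex nn)) (hI : ¬ IsIEdge e) :
    e ∈ (mkFactor nn hn g hg y).edges ↔ ∃ t : Fin 10, e = covered g y t := by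
  constructor
  · rintro (⟨a, ha⟩ | ⟨i, j, hij⟩)
    · exact absurd ⟨_, ha⟩ hI
    · have hcyc : (mkFactor nn hn g hg y).cyc = cycF g y := rfl
      rw [hcyc] at hij
      rcases Nat.mod_two_eq_zero_or_one j.val with h | h
      · exfalso
        apply hI
        rw [hij, cycF_alt_even g y i j h]
        exact ⟨_, rfl⟩
      · exact ⟨tIdx i j, by rw [hij, cyc_edge_eq_covered g y i j h]⟩
  · rintro ⟨t, ht⟩
    obtain ⟨j, hj1, hj2⟩ := key_slot_cyc t
    right
    refine ⟨itab t, j, ?_⟩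
    have hcyc : (mkFactor nn hn g hg y).cyc = cycF g y := rfl
    rw [hcyc, cyc_edge_eq_covered g y _ j hj1, hj2, ht]

lemma covered_not_diag {nn : ℕ} (g : Fin 10 → Fin nn) (hg : Function.Injective g)
    (y : Fin 10 → Fin 2) (t : Fin 10) : ¬ (covered g y t).IsDiag := by
  have hne : sB t ≠ t := by fin_cases t <;> decide
  simp only [covered, Sym2.isDiag_iff_proj_eq]
  intro h
  exact hne (hg (congrArg Prod.fst h).symm)

lemma covered_not_IEdge {nn : ℕ} (g : Fin 10 → Fin nn) (hg : Function.Injective g)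
    (y : Fin 10 → Fin 2) (t : Fin 10) : ¬ IsIEdge (covered g y t) := by
  have hne : sB t ≠ t := by fin_cases t <;> decide
  intro h
  exact hne (hg (isIEdge_fst h).symm)

/-! ### The concrete construction, for `k = K+1`, `n = 20k+5`, over `ZMod (n-1)` -/

def NN (K : ℕ) : ℕ := 20*K+24
def nn (K : ℕ) : ℕ := 20*K+25
def dS (K : ℕ) : ℕ := 10*K+12

instance (K : ℕ) : NeZero (NN K) := ⟨by simp [NN]⟩

def embc (K : ℕ) (z : ZMod (NN K)) : Fin (nn K) :=
  ⟨z.val, by have := ZMod.val_lt z; simp only [NN, nn] at *; omega⟩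

def infc (K : ℕ) : Fin (nn K) := ⟨NN K, by simp [NN, nn]⟩

section
variable {α : Type*}
@[simp] lemma vec10_0 (a b c d e f g h i j : α) : ![a,b,c,d,e,f,g,h,i,j] (0:Fin 10) = a := rfl
@[simp] lemma vec10_1 (a b c d e f g h i j : α) : ![a,b,c,d,e,f,g,h,i,j] (1:Fin 10) = b := rfl
@[simp] lemma vec10_2 (a b c d e f g h i j : α) : ![a,b,c,d,e,f,g,h,i,j] (2:Fin 10) = c := rfl
@[simp] lemma vec10_3 (a b c d e f g h i j : α) : ![a,b,c,d,e,f,g,h,i,j] (3:Fin 10) = d := rfl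
@[simp] lemma vec10_4 (a b c d e f g h i j : α) : ![a,b,c,d,e,f,g,h,i,j] (4:Fin 10) = e := rfl
@[simp] lemma vec10_5 (a b c d e f g h i j : α) : ![a,b,c,d,e,f,g,h,i,j] (5:Fin 10) = f := rfl
@[simp] lemma vec10_6 (a b c d e f g h i j : α) : ![a,b,c,d,e,f,g,h,i,j] (6:Fin 10) = g := rfl
@[simp] lemma vec10_7 (a b c d e f g h i j : α) : ![a,b,c,d,e,f,g,h,i,j] (7:Fin 10) = h := rfl
@[simp] lemma vec10_8 (a b c d e f g h i j : α) : ![a,b,c,d,e,f,g,h,i,j] (8:Fin 10) = i := rfl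
@[simp] lemma vec10_9 (a b c d e f g h i j : α) : ![a,b,c,d,e,f,g,h,i,j] (9:Fin 10) = j := rfl
end

lemma embc_inj (K : ℕ) : Function.Injective (embc K) := by
  intro a b h
  have h5 := congrArg Fin.val h
  exact ZMod.val_injective _ h5

lemma embc_ne_inf (K : ℕ) (z : ZMod (NN K)) : embc K z ≠ infc K := by
  intro h
  have := congrArg Fin.val h
  have h2 := ZMod.val_lt z
  simp only [embc, infc] at this
  omega

/-- index type for the factors -/
def Idx (K : ℕ) : Type :=
  (Fin 2 × Fin (dS K)) ⊕ (Fin 2 × ZMod (NN K)) ⊕ (Fin (2*K+1) × Fin 2 × ZMod (NN K))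

def yS : Fin 2 → Fin 10 → Fin 2 := ![![0,1,1,0,0,0,1,0,0,0], ![0,0,0,1,1,1,0,1,1,1]]
def yG : Fin 2 → Fin 10 → Fin 2 := ![![0,0,1,0,0,0,1,0,0,0], ![1,0,0,1,1,1,0,1,1,1]]

def baseS (K : ℕ) : Fin 10 → ℕ :=
  ![0, dS K, 2, 3, 5, 4, 2+dS K, 3+dS K, 5+dS K, 4+dS K]
def baseI : Fin 10 → ℕ := ![3, 0, 1, 4, 8, 5, 9, 14, 20, 15]
def baseG (K : ℕ) (j : Fin (2*K+1)) : Fin 10 → ℕ :=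
  ![0, 7+5*j.val, 1, 9+5*j.val, 18+10*j.val, 10+5*j.val, 2, 12+5*j.val, 23+10*j.val, 13+5*j.val]

def gOf (K : ℕ) : Idx K → Fin 10 → Fin (nn K)
  | .inl (_, i) => fun t => embc K ((baseS K t : ZMod (NN K)) + (i.val : ℕ))
  | .inr (.inl (_, r)) => fun t =>
      if t = 0 then infc K else embc K ((baseI t : ZMod (NN K)) + r)
  | .inr (.inr (j, _, r)) => fun t => embc K ((baseG K j t : ZMod (NN K)) + r)

def yOf (K : ℕ) : Idx K → Fin 10 → Fin 2
  | .inl (b, _) => yS b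
  | .inr (.inl (b, _)) => yG b
  | .inr (.inr (_, b, _)) => yG b

lemma base_inj_aux (K : ℕ) (f : Fin 10 → ℕ) (hlt : ∀ t, f t < NN K)
    (hinj : Function.Injective f) (r : ZMod (NN K)) :
    Function.Injective (fun t => embc K ((f t : ZMod (NN K)) + r)) := by
  intro t t' h
  apply hinj
  have h3 := add_right_cancel (embc_inj K h)
  have h4 := congrArg ZMod.val h3
  rwa [ZMod.val_natCast_of_lt (hlt t), ZMod.val_natCast_of_lt (hlt t')] at h4

lemma baseS_lt (K : ℕ) : ∀ t, baseS K t < NN K := by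
  rw [show (∀ t, baseS K t < NN K) ↔ ∀ x ∈ List.ofFn (baseS K), x < NN K from
    (List.forall_mem_ofFn_iff (P := fun x => x < NN K)).symm]
  simp [baseS, List.ofFn_succ, dS, NN]
  all_goals omega

lemma baseS_inj (K : ℕ) : Function.Injective (baseS K) := by
  rw [← List.nodup_ofFn]
  simp [baseS, List.ofFn_succ, dS]
  all_goals omega

lemma baseI_lt (K : ℕ) : ∀ t, baseI t < NN K := by
  rw [show (∀ t, baseI t < NN K) ↔ ∀ x ∈ List.ofFn baseI, x < NN K from
    (List.forall_mem_ofFn_iff (P := fun x => x < NN K)).symm]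
  simp [baseI, List.ofFn_succ, NN]
  all_goals omega

lemma baseI_inj : Function.Injective baseI := by
  rw [← List.nodup_ofFn]
  simp [baseI, List.ofFn_succ]

lemma baseG_lt (K : ℕ) (j : Fin (2*K+1)) : ∀ t, baseG K j t < NN K := by
  have hj : j.val < 2*K+1 := j.isLt
  rw [show (∀ t, baseG K j t < NN K) ↔ ∀ x ∈ List.ofFn (baseG K j), x < NN K from
    (List.forall_mem_ofFn_iff (P := fun x => x < NN K)).symm]
  simp [baseG, List.ofFn_succ, NN]
  all_goals omega

lemma baseG_inj (K : ℕ) (j : Fin (2*K+1)) : Function.Injective (baseG K j) := by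
  rw [← List.nodup_ofFn]
  simp [baseG, List.ofFn_succ]
  all_goals omega

lemma gOf_inj (K : ℕ) (idx : Idx K) : Function.Injective (gOf K idx) := by
  rcases idx with ⟨b, i⟩ | ⟨b, r⟩ | ⟨j, b, r⟩
  · exact base_inj_aux K _ (baseS_lt K) (baseS_inj K) _
  · intro t t' h
    simp only [gOf] at h
    by_cases h0 : t = 0 <;> by_cases h0' : t' = 0
    · rw [h0, h0']
    · rw [if_pos h0, if_neg h0'] at h
      exact absurd h.symm (embc_ne_inf K _)
    · rw [if_neg h0, if_pos h0'] at h
      exact absurd h (embc_ne_inf K _)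
    · rw [if_neg h0, if_neg h0'] at h
      exact base_inj_aux K _ (baseI_lt K) baseI_inj r h
  · exact base_inj_aux K _ (baseG_lt K j) (baseG_inj K j) _

noncomputable def factorOf (K : ℕ) (idx : Idx K) : HOPFactor (nn K) (nn K - 10) 3 ![2,4,4] :=
  mkFactor (nn K) (by simp [nn]) (gOf K idx) (gOf_inj K idx) (yOf K idx)

def coveredOf (K : ℕ) (idx : Idx K) (t : Fin 10) : Sym2 (HOPVertex (nn K)) :=
  covered (gOf K idx) (yOf K idx) t

lemma mk2 {m : ℕ} {a b c d : HOPVertex m} (h1 : a = c) (h2 : b = d) :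
    s(a,b) = s(c,d) := by rw [h1, h2]

lemma mk2s {m : ℕ} {a b c d : HOPVertex m} (h1 : a = d) (h2 : b = c) :
    s(a,b) = s(c,d) := by rw [h1, h2, Sym2.eq_swap]

lemma vx {K : ℕ} {u v : ZMod (NN K)} {l l' : Fin 2} (h : u = v) (hl : l = l') :
    ((embc K u, l) : HOPVertex (nn K)) = (embc K v, l') := by rw [h, hl]

lemma cast_val {K : ℕ} (a : ZMod (NN K)) : ((a.val : ℕ) : ZMod (NN K)) = a :=
  ZMod.natCast_rightInverse a

lemma ds_add_ds (K : ℕ) :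
    ((dS K : ℕ) : ZMod (NN K)) + ((dS K : ℕ) : ZMod (NN K)) = 0 := by
  rw [← Nat.cast_add, show dS K + dS K = NN K from by simp [dS, NN]; omega,
    ZMod.natCast_self]
lemma surj_fin (K : ℕ) (z : ZMod (NN K)) (δ : ℕ) (hd1 : 1 ≤ δ) (hd2 : δ ≤ dS K)
    (α β : Fin 2) : ∃ (idx : Idx K) (t : Fin 10),
      coveredOf K idx t = s((embc K z, α), (embc K (z + (δ : ZMod (NN K))), β)) := by
  have hd2' : δ ≤ 10*K+12 := by simpa [dS] using hd2
  rcases show δ = 1 ∨ δ = 2 ∨ δ = 3 ∨ δ = 4 ∨ δ = 5 ∨ δ = 6 ∨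
      (7 ≤ δ ∧ δ ≤ 10*K+11) ∨ δ = 10*K+12 from by omega with
    h|h|h|h|h|h|⟨h7,h8⟩|h
  · -- δ = 1
    subst h
    fin_cases α <;> fin_cases β
    · by_cases hw : (z - (2 : ZMod (NN K))).val < dS K
      · refine ⟨.inl (⟨0, ⟨(z - (2 : ZMod (NN K))).val, hw⟩⟩), 2, mk2 (vx ?_ rfl) (vx ?_ rfl)⟩
        · show ((2 : ℕ) : ZMod (NN K)) + (((z - (2 : ZMod (NN K))).val : ℕ) : ZMod (NN K)) = z
          rw [cast_val]; push_cast; ring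
        · show ((3 : ℕ) : ZMod (NN K)) + (((z - (2 : ZMod (NN K))).val : ℕ) : ZMod (NN K)) = z + ((1 : ℕ) : ZMod (NN K))
          rw [cast_val]; push_cast; ring
      · refine ⟨.inl (⟨0, ⟨(z - (2 : ZMod (NN K))).val - dS K, by have := ZMod.val_lt (z - (2 : ZMod (NN K))); simp only [NN, dS] at *; omega⟩⟩), 6, mk2 (vx ?_ rfl) (vx ?_ rfl)⟩
        · show ((2 + dS K : ℕ) : ZMod (NN K)) + (((z - (2 : ZMod (NN K))).val - dS K : ℕ) : ZMod (NN K)) = z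
          rw [Nat.cast_sub (le_of_not_gt hw), cast_val]; push_cast; ring
        · show ((3 + dS K : ℕ) : ZMod (NN K)) + (((z - (2 : ZMod (NN K))).val - dS K : ℕ) : ZMod (NN K)) = z + ((1 : ℕ) : ZMod (NN K))
          rw [Nat.cast_sub (le_of_not_gt hw), cast_val]; push_cast; ring
    · by_cases hw : (z - (4 : ZMod (NN K))).val < dS K
      · refine ⟨.inl (⟨0, ⟨(z - (4 : ZMod (NN K))).val, hw⟩⟩), 4, mk2s (vx ?_ rfl) (vx ?_ rfl)⟩
        · show ((5 : ℕ) : ZMod (NN K)) + (((z - (4 : ZMod (NN K))).val : ℕ) : ZMod (NN K)) = z + ((1 : ℕ) : ZMod (NN K))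
          rw [cast_val]; push_cast; ring
        · show ((4 : ℕ) : ZMod (NN K)) + (((z - (4 : ZMod (NN K))).val : ℕ) : ZMod (NN K)) = z
          rw [cast_val]; push_cast; ring
      · refine ⟨.inl (⟨0, ⟨(z - (4 : ZMod (NN K))).val - dS K, by have := ZMod.val_lt (z - (4 : ZMod (NN K))); simp only [NN, dS] at *; omega⟩⟩), 8, mk2s (vx ?_ rfl) (vx ?_ rfl)⟩
        · show ((5 + dS K : ℕ) : ZMod (NN K)) + (((z - (4 : ZMod (NN K))).val - dS K : ℕ) : ZMod (NN K)) = z + ((1 : ℕ) : ZMod (NN K))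
          rw [Nat.cast_sub (le_of_not_gt hw), cast_val]; push_cast; ring
        · show ((4 + dS K : ℕ) : ZMod (NN K)) + (((z - (4 : ZMod (NN K))).val - dS K : ℕ) : ZMod (NN K)) = z
          rw [Nat.cast_sub (le_of_not_gt hw), cast_val]; push_cast; ring
    · by_cases hw : (z - (4 : ZMod (NN K))).val < dS K
      · refine ⟨.inl (⟨1, ⟨(z - (4 : ZMod (NN K))).val, hw⟩⟩), 4, mk2s (vx ?_ rfl) (vx ?_ rfl)⟩
        · show ((5 : ℕ) : ZMod (NN K)) + (((z - (4 : ZMod (NN K))).val : ℕ) : ZMod (NN K)) = z + ((1 : ℕ) : ZMod (NN K))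
          rw [cast_val]; push_cast; ring
        · show ((4 : ℕ) : ZMod (NN K)) + (((z - (4 : ZMod (NN K))).val : ℕ) : ZMod (NN K)) = z
          rw [cast_val]; push_cast; ring
      · refine ⟨.inl (⟨1, ⟨(z - (4 : ZMod (NN K))).val - dS K, by have := ZMod.val_lt (z - (4 : ZMod (NN K))); simp only [NN, dS] at *; omega⟩⟩), 8, mk2s (vx ?_ rfl) (vx ?_ rfl)⟩
        · show ((5 + dS K : ℕ) : ZMod (NN K)) + (((z - (4 : ZMod (NN K))).val - dS K : ℕ) : ZMod (NN K)) = z + ((1 : ℕ) : ZMod (NN K))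
          rw [Nat.cast_sub (le_of_not_gt hw), cast_val]; push_cast; ring
        · show ((4 + dS K : ℕ) : ZMod (NN K)) + (((z - (4 : ZMod (NN K))).val - dS K : ℕ) : ZMod (NN K)) = z
          rw [Nat.cast_sub (le_of_not_gt hw), cast_val]; push_cast; ring
    · by_cases hw : (z - (2 : ZMod (NN K))).val < dS K
      · refine ⟨.inl (⟨1, ⟨(z - (2 : ZMod (NN K))).val, hw⟩⟩), 2, mk2 (vx ?_ rfl) (vx ?_ rfl)⟩
        · show ((2 : ℕ) : ZMod (NN K)) + (((z - (2 : ZMod (NN K))).val : ℕ) : ZMod (NN K)) = z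
          rw [cast_val]; push_cast; ring
        · show ((3 : ℕ) : ZMod (NN K)) + (((z - (2 : ZMod (NN K))).val : ℕ) : ZMod (NN K)) = z + ((1 : ℕ) : ZMod (NN K))
          rw [cast_val]; push_cast; ring
      · refine ⟨.inl (⟨1, ⟨(z - (2 : ZMod (NN K))).val - dS K, by have := ZMod.val_lt (z - (2 : ZMod (NN K))); simp only [NN, dS] at *; omega⟩⟩), 6, mk2 (vx ?_ rfl) (vx ?_ rfl)⟩
        · show ((2 + dS K : ℕ) : ZMod (NN K)) + (((z - (2 : ZMod (NN K))).val - dS K : ℕ) : ZMod (NN K)) = z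
          rw [Nat.cast_sub (le_of_not_gt hw), cast_val]; push_cast; ring
        · show ((3 + dS K : ℕ) : ZMod (NN K)) + (((z - (2 : ZMod (NN K))).val - dS K : ℕ) : ZMod (NN K)) = z + ((1 : ℕ) : ZMod (NN K))
          rw [Nat.cast_sub (le_of_not_gt hw), cast_val]; push_cast; ring
  · -- δ = 2
    subst h
    fin_cases α <;> fin_cases β
    · by_cases hw : (z - (2 : ZMod (NN K))).val < dS K
      · refine ⟨.inl (⟨1, ⟨(z - (2 : ZMod (NN K))).val, hw⟩⟩), 5, mk2s (vx ?_ rfl) (vx ?_ rfl)⟩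
        · show ((4 : ℕ) : ZMod (NN K)) + (((z - (2 : ZMod (NN K))).val : ℕ) : ZMod (NN K)) = z + ((2 : ℕ) : ZMod (NN K))
          rw [cast_val]; push_cast; ring
        · show ((2 : ℕ) : ZMod (NN K)) + (((z - (2 : ZMod (NN K))).val : ℕ) : ZMod (NN K)) = z
          rw [cast_val]; push_cast; ring
      · refine ⟨.inl (⟨1, ⟨(z - (2 : ZMod (NN K))).val - dS K, by have := ZMod.val_lt (z - (2 : ZMod (NN K))); simp only [NN, dS] at *; omega⟩⟩), 9, mk2s (vx ?_ rfl) (vx ?_ rfl)⟩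
        · show ((4 + dS K : ℕ) : ZMod (NN K)) + (((z - (2 : ZMod (NN K))).val - dS K : ℕ) : ZMod (NN K)) = z + ((2 : ℕ) : ZMod (NN K))
          rw [Nat.cast_sub (le_of_not_gt hw), cast_val]; push_cast; ring
        · show ((2 + dS K : ℕ) : ZMod (NN K)) + (((z - (2 : ZMod (NN K))).val - dS K : ℕ) : ZMod (NN K)) = z
          rw [Nat.cast_sub (le_of_not_gt hw), cast_val]; push_cast; ring
    · by_cases hw : (z - (3 : ZMod (NN K))).val < dS K
      · refine ⟨.inl (⟨1, ⟨(z - (3 : ZMod (NN K))).val, hw⟩⟩), 3, mk2 (vx ?_ rfl) (vx ?_ rfl)⟩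
        · show ((3 : ℕ) : ZMod (NN K)) + (((z - (3 : ZMod (NN K))).val : ℕ) : ZMod (NN K)) = z
          rw [cast_val]; push_cast; ring
        · show ((5 : ℕ) : ZMod (NN K)) + (((z - (3 : ZMod (NN K))).val : ℕ) : ZMod (NN K)) = z + ((2 : ℕ) : ZMod (NN K))
          rw [cast_val]; push_cast; ring
      · refine ⟨.inl (⟨1, ⟨(z - (3 : ZMod (NN K))).val - dS K, by have := ZMod.val_lt (z - (3 : ZMod (NN K))); simp only [NN, dS] at *; omega⟩⟩), 7, mk2 (vx ?_ rfl) (vx ?_ rfl)⟩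
        · show ((3 + dS K : ℕ) : ZMod (NN K)) + (((z - (3 : ZMod (NN K))).val - dS K : ℕ) : ZMod (NN K)) = z
          rw [Nat.cast_sub (le_of_not_gt hw), cast_val]; push_cast; ring
        · show ((5 + dS K : ℕ) : ZMod (NN K)) + (((z - (3 : ZMod (NN K))).val - dS K : ℕ) : ZMod (NN K)) = z + ((2 : ℕ) : ZMod (NN K))
          rw [Nat.cast_sub (le_of_not_gt hw), cast_val]; push_cast; ring
    · by_cases hw : (z - (3 : ZMod (NN K))).val < dS K
      · refine ⟨.inl (⟨0, ⟨(z - (3 : ZMod (NN K))).val, hw⟩⟩), 3, mk2 (vx ?_ rfl) (vx ?_ rfl)⟩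
        · show ((3 : ℕ) : ZMod (NN K)) + (((z - (3 : ZMod (NN K))).val : ℕ) : ZMod (NN K)) = z
          rw [cast_val]; push_cast; ring
        · show ((5 : ℕ) : ZMod (NN K)) + (((z - (3 : ZMod (NN K))).val : ℕ) : ZMod (NN K)) = z + ((2 : ℕ) : ZMod (NN K))
          rw [cast_val]; push_cast; ring
      · refine ⟨.inl (⟨0, ⟨(z - (3 : ZMod (NN K))).val - dS K, by have := ZMod.val_lt (z - (3 : ZMod (NN K))); simp only [NN, dS] at *; omega⟩⟩), 7, mk2 (vx ?_ rfl) (vx ?_ rfl)⟩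
        · show ((3 + dS K : ℕ) : ZMod (NN K)) + (((z - (3 : ZMod (NN K))).val - dS K : ℕ) : ZMod (NN K)) = z
          rw [Nat.cast_sub (le_of_not_gt hw), cast_val]; push_cast; ring
        · show ((5 + dS K : ℕ) : ZMod (NN K)) + (((z - (3 : ZMod (NN K))).val - dS K : ℕ) : ZMod (NN K)) = z + ((2 : ℕ) : ZMod (NN K))
          rw [Nat.cast_sub (le_of_not_gt hw), cast_val]; push_cast; ring
    · by_cases hw : (z - (2 : ZMod (NN K))).val < dS K
      · refine ⟨.inl (⟨0, ⟨(z - (2 : ZMod (NN K))).val, hw⟩⟩), 5, mk2s (vx ?_ rfl) (vx ?_ rfl)⟩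
        · show ((4 : ℕ) : ZMod (NN K)) + (((z - (2 : ZMod (NN K))).val : ℕ) : ZMod (NN K)) = z + ((2 : ℕ) : ZMod (NN K))
          rw [cast_val]; push_cast; ring
        · show ((2 : ℕ) : ZMod (NN K)) + (((z - (2 : ZMod (NN K))).val : ℕ) : ZMod (NN K)) = z
          rw [cast_val]; push_cast; ring
      · refine ⟨.inl (⟨0, ⟨(z - (2 : ZMod (NN K))).val - dS K, by have := ZMod.val_lt (z - (2 : ZMod (NN K))); simp only [NN, dS] at *; omega⟩⟩), 9, mk2s (vx ?_ rfl) (vx ?_ rfl)⟩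
        · show ((4 + dS K : ℕ) : ZMod (NN K)) + (((z - (2 : ZMod (NN K))).val - dS K : ℕ) : ZMod (NN K)) = z + ((2 : ℕ) : ZMod (NN K))
          rw [Nat.cast_sub (le_of_not_gt hw), cast_val]; push_cast; ring
        · show ((2 + dS K : ℕ) : ZMod (NN K)) + (((z - (2 : ZMod (NN K))).val - dS K : ℕ) : ZMod (NN K)) = z
          rw [Nat.cast_sub (le_of_not_gt hw), cast_val]; push_cast; ring
  · -- δ = 3
    subst h
    fin_cases α <;> fin_cases β
    · refine ⟨.inr (.inl (⟨0, (z - ((1 : ℕ) : ZMod (NN K)))⟩)), 2, mk2 (vx ?_ rfl) (vx ?_ rfl)⟩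
      · show ((1 : ℕ) : ZMod (NN K)) + (z - ((1 : ℕ) : ZMod (NN K))) = z
        push_cast; ring
      · show ((4 : ℕ) : ZMod (NN K)) + (z - ((1 : ℕ) : ZMod (NN K))) = z + ((3 : ℕ) : ZMod (NN K))
        push_cast; ring
    · refine ⟨.inr (.inl (⟨0, (z - ((5 : ℕ) : ZMod (NN K)))⟩)), 4, mk2s (vx ?_ rfl) (vx ?_ rfl)⟩
      · show ((8 : ℕ) : ZMod (NN K)) + (z - ((5 : ℕ) : ZMod (NN K))) = z + ((3 : ℕ) : ZMod (NN K))
        push_cast; ring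
      · show ((5 : ℕ) : ZMod (NN K)) + (z - ((5 : ℕ) : ZMod (NN K))) = z
        push_cast; ring
    · refine ⟨.inr (.inl (⟨1, (z - ((5 : ℕ) : ZMod (NN K)))⟩)), 4, mk2s (vx ?_ rfl) (vx ?_ rfl)⟩
      · show ((8 : ℕ) : ZMod (NN K)) + (z - ((5 : ℕ) : ZMod (NN K))) = z + ((3 : ℕ) : ZMod (NN K))
        push_cast; ring
      · show ((5 : ℕ) : ZMod (NN K)) + (z - ((5 : ℕ) : ZMod (NN K))) = z
        push_cast; ring
    · refine ⟨.inr (.inl (⟨1, (z - ((1 : ℕ) : ZMod (NN K)))⟩)), 2, mk2 (vx ?_ rfl) (vx ?_ rfl)⟩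
      · show ((1 : ℕ) : ZMod (NN K)) + (z - ((1 : ℕ) : ZMod (NN K))) = z
        push_cast; ring
      · show ((4 : ℕ) : ZMod (NN K)) + (z - ((1 : ℕ) : ZMod (NN K))) = z + ((3 : ℕ) : ZMod (NN K))
        push_cast; ring
  · -- δ = 4
    subst h
    fin_cases α <;> fin_cases β
    · refine ⟨.inr (.inl (⟨1, (z - ((1 : ℕ) : ZMod (NN K)))⟩)), 5, mk2s (vx ?_ rfl) (vx ?_ rfl)⟩
      · show ((5 : ℕ) : ZMod (NN K)) + (z - ((1 : ℕ) : ZMod (NN K))) = z + ((4 : ℕ) : ZMod (NN K))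
        push_cast; ring
      · show ((1 : ℕ) : ZMod (NN K)) + (z - ((1 : ℕ) : ZMod (NN K))) = z
        push_cast; ring
    · refine ⟨.inr (.inl (⟨1, (z - ((4 : ℕ) : ZMod (NN K)))⟩)), 3, mk2 (vx ?_ rfl) (vx ?_ rfl)⟩
      · show ((4 : ℕ) : ZMod (NN K)) + (z - ((4 : ℕ) : ZMod (NN K))) = z
        push_cast; ring
      · show ((8 : ℕ) : ZMod (NN K)) + (z - ((4 : ℕ) : ZMod (NN K))) = z + ((4 : ℕ) : ZMod (NN K))
        push_cast; ring
    · refine ⟨.inr (.inl (⟨0, (z - ((4 : ℕ) : ZMod (NN K)))⟩)), 3, mk2 (vx ?_ rfl) (vx ?_ rfl)⟩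
      · show ((4 : ℕ) : ZMod (NN K)) + (z - ((4 : ℕ) : ZMod (NN K))) = z
        push_cast; ring
      · show ((8 : ℕ) : ZMod (NN K)) + (z - ((4 : ℕ) : ZMod (NN K))) = z + ((4 : ℕ) : ZMod (NN K))
        push_cast; ring
    · refine ⟨.inr (.inl (⟨0, (z - ((1 : ℕ) : ZMod (NN K)))⟩)), 5, mk2s (vx ?_ rfl) (vx ?_ rfl)⟩
      · show ((5 : ℕ) : ZMod (NN K)) + (z - ((1 : ℕ) : ZMod (NN K))) = z + ((4 : ℕ) : ZMod (NN K))
        push_cast; ring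
      · show ((1 : ℕ) : ZMod (NN K)) + (z - ((1 : ℕ) : ZMod (NN K))) = z
        push_cast; ring
  · -- δ = 5
    subst h
    fin_cases α <;> fin_cases β
    · refine ⟨.inr (.inl (⟨0, (z - ((9 : ℕ) : ZMod (NN K)))⟩)), 6, mk2 (vx ?_ rfl) (vx ?_ rfl)⟩
      · show ((9 : ℕ) : ZMod (NN K)) + (z - ((9 : ℕ) : ZMod (NN K))) = z
        push_cast; ring
      · show ((14 : ℕ) : ZMod (NN K)) + (z - ((9 : ℕ) : ZMod (NN K))) = z + ((5 : ℕ) : ZMod (NN K))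
        push_cast; ring
    · refine ⟨.inr (.inl (⟨0, (z - ((15 : ℕ) : ZMod (NN K)))⟩)), 8, mk2s (vx ?_ rfl) (vx ?_ rfl)⟩
      · show ((20 : ℕ) : ZMod (NN K)) + (z - ((15 : ℕ) : ZMod (NN K))) = z + ((5 : ℕ) : ZMod (NN K))
        push_cast; ring
      · show ((15 : ℕ) : ZMod (NN K)) + (z - ((15 : ℕ) : ZMod (NN K))) = z
        push_cast; ring
    · refine ⟨.inr (.inl (⟨1, (z - ((15 : ℕ) : ZMod (NN K)))⟩)), 8, mk2s (vx ?_ rfl) (vx ?_ rfl)⟩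
      · show ((20 : ℕ) : ZMod (NN K)) + (z - ((15 : ℕ) : ZMod (NN K))) = z + ((5 : ℕ) : ZMod (NN K))
        push_cast; ring
      · show ((15 : ℕ) : ZMod (NN K)) + (z - ((15 : ℕ) : ZMod (NN K))) = z
        push_cast; ring
    · refine ⟨.inr (.inl (⟨1, (z - ((9 : ℕ) : ZMod (NN K)))⟩)), 6, mk2 (vx ?_ rfl) (vx ?_ rfl)⟩
      · show ((9 : ℕ) : ZMod (NN K)) + (z - ((9 : ℕ) : ZMod (NN K))) = z
        push_cast; ring
      · show ((14 : ℕ) : ZMod (NN K)) + (z - ((9 : ℕ) : ZMod (NN K))) = z + ((5 : ℕ) : ZMod (NN K))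
        push_cast; ring
  · -- δ = 6
    subst h
    fin_cases α <;> fin_cases β
    · refine ⟨.inr (.inl (⟨1, (z - ((9 : ℕ) : ZMod (NN K)))⟩)), 9, mk2s (vx ?_ rfl) (vx ?_ rfl)⟩
      · show ((15 : ℕ) : ZMod (NN K)) + (z - ((9 : ℕ) : ZMod (NN K))) = z + ((6 : ℕ) : ZMod (NN K))
        push_cast; ring
      · show ((9 : ℕ) : ZMod (NN K)) + (z - ((9 : ℕ) : ZMod (NN K))) = z
        push_cast; ring
    · refine ⟨.inr (.inl (⟨1, (z - ((14 : ℕ) : ZMod (NN K)))⟩)), 7, mk2 (vx ?_ rfl) (vx ?_ rfl)⟩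
      · show ((14 : ℕ) : ZMod (NN K)) + (z - ((14 : ℕ) : ZMod (NN K))) = z
        push_cast; ring
      · show ((20 : ℕ) : ZMod (NN K)) + (z - ((14 : ℕ) : ZMod (NN K))) = z + ((6 : ℕ) : ZMod (NN K))
        push_cast; ring
    · refine ⟨.inr (.inl (⟨0, (z - ((14 : ℕ) : ZMod (NN K)))⟩)), 7, mk2 (vx ?_ rfl) (vx ?_ rfl)⟩
      · show ((14 : ℕ) : ZMod (NN K)) + (z - ((14 : ℕ) : ZMod (NN K))) = z
        push_cast; ring
      · show ((20 : ℕ) : ZMod (NN K)) + (z - ((14 : ℕ) : ZMod (NN K))) = z + ((6 : ℕ) : ZMod (NN K))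
        push_cast; ring
    · refine ⟨.inr (.inl (⟨0, (z - ((9 : ℕ) : ZMod (NN K)))⟩)), 9, mk2s (vx ?_ rfl) (vx ?_ rfl)⟩
      · show ((15 : ℕ) : ZMod (NN K)) + (z - ((9 : ℕ) : ZMod (NN K))) = z + ((6 : ℕ) : ZMod (NN K))
        push_cast; ring
      · show ((9 : ℕ) : ZMod (NN K)) + (z - ((9 : ℕ) : ZMod (NN K))) = z
        push_cast; ring
  · -- 7 ≤ δ ≤ 10K+11
    obtain ⟨jv, hjv, hcase⟩ : ∃ jv, jv < 2*K+1 ∧ (δ = 7 + 5 * jv ∨ δ = 8 + 5 * jv ∨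
        δ = 9 + 5 * jv ∨ δ = 10 + 5 * jv ∨ δ = 11 + 5 * jv) :=
      ⟨(δ-7)/5, by omega, by omega⟩
    rcases hcase with h|h|h|h|h
    · -- δ = 7 + 5 * jv
      subst h
      fin_cases α <;> fin_cases β
      · refine ⟨.inr (.inr (⟨⟨jv, by omega⟩, 1, (z - ((0 : ℕ) : ZMod (NN K)))⟩)), 0, mk2 (vx ?_ rfl) (vx ?_ rfl)⟩
        · show ((0 : ℕ) : ZMod (NN K)) + (z - ((0 : ℕ) : ZMod (NN K))) = z
          push_cast; ring
        · show ((7 + 5 * jv : ℕ) : ZMod (NN K)) + (z - ((0 : ℕ) : ZMod (NN K))) = z + ((7 + 5 * jv : ℕ) : ZMod (NN K))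
          push_cast; ring
      · refine ⟨.inr (.inr (⟨⟨jv, by omega⟩, 0, (z - ((0 : ℕ) : ZMod (NN K)))⟩)), 1, mk2s (vx ?_ rfl) (vx ?_ rfl)⟩
        · show ((7 + 5 * jv : ℕ) : ZMod (NN K)) + (z - ((0 : ℕ) : ZMod (NN K))) = z + ((7 + 5 * jv : ℕ) : ZMod (NN K))
          push_cast; ring
        · show ((0 : ℕ) : ZMod (NN K)) + (z - ((0 : ℕ) : ZMod (NN K))) = z
          push_cast; ring
      · refine ⟨.inr (.inr (⟨⟨jv, by omega⟩, 0, (z - ((0 : ℕ) : ZMod (NN K)))⟩)), 0, mk2 (vx ?_ rfl) (vx ?_ rfl)⟩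
        · show ((0 : ℕ) : ZMod (NN K)) + (z - ((0 : ℕ) : ZMod (NN K))) = z
          push_cast; ring
        · show ((7 + 5 * jv : ℕ) : ZMod (NN K)) + (z - ((0 : ℕ) : ZMod (NN K))) = z + ((7 + 5 * jv : ℕ) : ZMod (NN K))
          push_cast; ring
      · refine ⟨.inr (.inr (⟨⟨jv, by omega⟩, 1, (z - ((0 : ℕ) : ZMod (NN K)))⟩)), 1, mk2s (vx ?_ rfl) (vx ?_ rfl)⟩
        · show ((7 + 5 * jv : ℕ) : ZMod (NN K)) + (z - ((0 : ℕ) : ZMod (NN K))) = z + ((7 + 5 * jv : ℕ) : ZMod (NN K))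
          push_cast; ring
        · show ((0 : ℕ) : ZMod (NN K)) + (z - ((0 : ℕ) : ZMod (NN K))) = z
          push_cast; ring
    · -- δ = 8 + 5 * jv
      subst h
      fin_cases α <;> fin_cases β
      · refine ⟨.inr (.inr (⟨⟨jv, by omega⟩, 0, (z - ((1 : ℕ) : ZMod (NN K)))⟩)), 2, mk2 (vx ?_ rfl) (vx ?_ rfl)⟩
        · show ((1 : ℕ) : ZMod (NN K)) + (z - ((1 : ℕ) : ZMod (NN K))) = z
          push_cast; ring
        · show ((9 + 5 * jv : ℕ) : ZMod (NN K)) + (z - ((1 : ℕ) : ZMod (NN K))) = z + ((8 + 5 * jv : ℕ) : ZMod (NN K))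
          push_cast; ring
      · refine ⟨.inr (.inr (⟨⟨jv, by omega⟩, 0, (z - ((10 + 5 * jv : ℕ) : ZMod (NN K)))⟩)), 4, mk2s (vx ?_ rfl) (vx ?_ rfl)⟩
        · show ((18 + 10 * jv : ℕ) : ZMod (NN K)) + (z - ((10 + 5 * jv : ℕ) : ZMod (NN K))) = z + ((8 + 5 * jv : ℕ) : ZMod (NN K))
          push_cast; ring
        · show ((10 + 5 * jv : ℕ) : ZMod (NN K)) + (z - ((10 + 5 * jv : ℕ) : ZMod (NN K))) = z
          push_cast; ring
      · refine ⟨.inr (.inr (⟨⟨jv, by omega⟩, 1, (z - ((10 + 5 * jv : ℕ) : ZMod (NN K)))⟩)), 4, mk2s (vx ?_ rfl) (vx ?_ rfl)⟩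
        · show ((18 + 10 * jv : ℕ) : ZMod (NN K)) + (z - ((10 + 5 * jv : ℕ) : ZMod (NN K))) = z + ((8 + 5 * jv : ℕ) : ZMod (NN K))
          push_cast; ring
        · show ((10 + 5 * jv : ℕ) : ZMod (NN K)) + (z - ((10 + 5 * jv : ℕ) : ZMod (NN K))) = z
          push_cast; ring
      · refine ⟨.inr (.inr (⟨⟨jv, by omega⟩, 1, (z - ((1 : ℕ) : ZMod (NN K)))⟩)), 2, mk2 (vx ?_ rfl) (vx ?_ rfl)⟩
        · show ((1 : ℕ) : ZMod (NN K)) + (z - ((1 : ℕ) : ZMod (NN K))) = z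
          push_cast; ring
        · show ((9 + 5 * jv : ℕ) : ZMod (NN K)) + (z - ((1 : ℕ) : ZMod (NN K))) = z + ((8 + 5 * jv : ℕ) : ZMod (NN K))
          push_cast; ring
    · -- δ = 9 + 5 * jv
      subst h
      fin_cases α <;> fin_cases β
      · refine ⟨.inr (.inr (⟨⟨jv, by omega⟩, 1, (z - ((1 : ℕ) : ZMod (NN K)))⟩)), 5, mk2s (vx ?_ rfl) (vx ?_ rfl)⟩
        · show ((10 + 5 * jv : ℕ) : ZMod (NN K)) + (z - ((1 : ℕ) : ZMod (NN K))) = z + ((9 + 5 * jv : ℕ) : ZMod (NN K))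
          push_cast; ring
        · show ((1 : ℕ) : ZMod (NN K)) + (z - ((1 : ℕ) : ZMod (NN K))) = z
          push_cast; ring
      · refine ⟨.inr (.inr (⟨⟨jv, by omega⟩, 1, (z - ((9 + 5 * jv : ℕ) : ZMod (NN K)))⟩)), 3, mk2 (vx ?_ rfl) (vx ?_ rfl)⟩
        · show ((9 + 5 * jv : ℕ) : ZMod (NN K)) + (z - ((9 + 5 * jv : ℕ) : ZMod (NN K))) = z
          push_cast; ring
        · show ((18 + 10 * jv : ℕ) : ZMod (NN K)) + (z - ((9 + 5 * jv : ℕ) : ZMod (NN K))) = z + ((9 + 5 * jv : ℕ) : ZMod (NN K))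
          push_cast; ring
      · refine ⟨.inr (.inr (⟨⟨jv, by omega⟩, 0, (z - ((9 + 5 * jv : ℕ) : ZMod (NN K)))⟩)), 3, mk2 (vx ?_ rfl) (vx ?_ rfl)⟩
        · show ((9 + 5 * jv : ℕ) : ZMod (NN K)) + (z - ((9 + 5 * jv : ℕ) : ZMod (NN K))) = z
          push_cast; ring
        · show ((18 + 10 * jv : ℕ) : ZMod (NN K)) + (z - ((9 + 5 * jv : ℕ) : ZMod (NN K))) = z + ((9 + 5 * jv : ℕ) : ZMod (NN K))
          push_cast; ring
      · refine ⟨.inr (.inr (⟨⟨jv, by omega⟩, 0, (z - ((1 : ℕ) : ZMod (NN K)))⟩)), 5, mk2s (vx ?_ rfl) (vx ?_ rfl)⟩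
        · show ((10 + 5 * jv : ℕ) : ZMod (NN K)) + (z - ((1 : ℕ) : ZMod (NN K))) = z + ((9 + 5 * jv : ℕ) : ZMod (NN K))
          push_cast; ring
        · show ((1 : ℕ) : ZMod (NN K)) + (z - ((1 : ℕ) : ZMod (NN K))) = z
          push_cast; ring
    · -- δ = 10 + 5 * jv
      subst h
      fin_cases α <;> fin_cases β
      · refine ⟨.inr (.inr (⟨⟨jv, by omega⟩, 0, (z - ((2 : ℕ) : ZMod (NN K)))⟩)), 6, mk2 (vx ?_ rfl) (vx ?_ rfl)⟩
        · show ((2 : ℕ) : ZMod (NN K)) + (z - ((2 : ℕ) : ZMod (NN K))) = z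
          push_cast; ring
        · show ((12 + 5 * jv : ℕ) : ZMod (NN K)) + (z - ((2 : ℕ) : ZMod (NN K))) = z + ((10 + 5 * jv : ℕ) : ZMod (NN K))
          push_cast; ring
      · refine ⟨.inr (.inr (⟨⟨jv, by omega⟩, 0, (z - ((13 + 5 * jv : ℕ) : ZMod (NN K)))⟩)), 8, mk2s (vx ?_ rfl) (vx ?_ rfl)⟩
        · show ((23 + 10 * jv : ℕ) : ZMod (NN K)) + (z - ((13 + 5 * jv : ℕ) : ZMod (NN K))) = z + ((10 + 5 * jv : ℕ) : ZMod (NN K))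
          push_cast; ring
        · show ((13 + 5 * jv : ℕ) : ZMod (NN K)) + (z - ((13 + 5 * jv : ℕ) : ZMod (NN K))) = z
          push_cast; ring
      · refine ⟨.inr (.inr (⟨⟨jv, by omega⟩, 1, (z - ((13 + 5 * jv : ℕ) : ZMod (NN K)))⟩)), 8, mk2s (vx ?_ rfl) (vx ?_ rfl)⟩
        · show ((23 + 10 * jv : ℕ) : ZMod (NN K)) + (z - ((13 + 5 * jv : ℕ) : ZMod (NN K))) = z + ((10 + 5 * jv : ℕ) : ZMod (NN K))
          push_cast; ring
        · show ((13 + 5 * jv : ℕ) : ZMod (NN K)) + (z - ((13 + 5 * jv : ℕ) : ZMod (NN K))) = z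
          push_cast; ring
      · refine ⟨.inr (.inr (⟨⟨jv, by omega⟩, 1, (z - ((2 : ℕ) : ZMod (NN K)))⟩)), 6, mk2 (vx ?_ rfl) (vx ?_ rfl)⟩
        · show ((2 : ℕ) : ZMod (NN K)) + (z - ((2 : ℕ) : ZMod (NN K))) = z
          push_cast; ring
        · show ((12 + 5 * jv : ℕ) : ZMod (NN K)) + (z - ((2 : ℕ) : ZMod (NN K))) = z + ((10 + 5 * jv : ℕ) : ZMod (NN K))
          push_cast; ring
    · -- δ = 11 + 5 * jv
      subst h
      fin_cases α <;> fin_cases β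
      · refine ⟨.inr (.inr (⟨⟨jv, by omega⟩, 1, (z - ((2 : ℕ) : ZMod (NN K)))⟩)), 9, mk2s (vx ?_ rfl) (vx ?_ rfl)⟩
        · show ((13 + 5 * jv : ℕ) : ZMod (NN K)) + (z - ((2 : ℕ) : ZMod (NN K))) = z + ((11 + 5 * jv : ℕ) : ZMod (NN K))
          push_cast; ring
        · show ((2 : ℕ) : ZMod (NN K)) + (z - ((2 : ℕ) : ZMod (NN K))) = z
          push_cast; ring
      · refine ⟨.inr (.inr (⟨⟨jv, by omega⟩, 1, (z - ((12 + 5 * jv : ℕ) : ZMod (NN K)))⟩)), 7, mk2 (vx ?_ rfl) (vx ?_ rfl)⟩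
        · show ((12 + 5 * jv : ℕ) : ZMod (NN K)) + (z - ((12 + 5 * jv : ℕ) : ZMod (NN K))) = z
          push_cast; ring
        · show ((23 + 10 * jv : ℕ) : ZMod (NN K)) + (z - ((12 + 5 * jv : ℕ) : ZMod (NN K))) = z + ((11 + 5 * jv : ℕ) : ZMod (NN K))
          push_cast; ring
      · refine ⟨.inr (.inr (⟨⟨jv, by omega⟩, 0, (z - ((12 + 5 * jv : ℕ) : ZMod (NN K)))⟩)), 7, mk2 (vx ?_ rfl) (vx ?_ rfl)⟩
        · show ((12 + 5 * jv : ℕ) : ZMod (NN K)) + (z - ((12 + 5 * jv : ℕ) : ZMod (NN K))) = z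
          push_cast; ring
        · show ((23 + 10 * jv : ℕ) : ZMod (NN K)) + (z - ((12 + 5 * jv : ℕ) : ZMod (NN K))) = z + ((11 + 5 * jv : ℕ) : ZMod (NN K))
          push_cast; ring
      · refine ⟨.inr (.inr (⟨⟨jv, by omega⟩, 0, (z - ((2 : ℕ) : ZMod (NN K)))⟩)), 9, mk2s (vx ?_ rfl) (vx ?_ rfl)⟩
        · show ((13 + 5 * jv : ℕ) : ZMod (NN K)) + (z - ((2 : ℕ) : ZMod (NN K))) = z + ((11 + 5 * jv : ℕ) : ZMod (NN K))
          push_cast; ring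
        · show ((2 : ℕ) : ZMod (NN K)) + (z - ((2 : ℕ) : ZMod (NN K))) = z
          push_cast; ring
  · -- δ = dS K
    have h' : δ = dS K := by simp only [dS]; omega
    clear h
    subst h'
    fin_cases α <;> fin_cases β
    · by_cases hw : z.val < dS K
      · refine ⟨.inl (⟨0, ⟨z.val, hw⟩⟩), 1, mk2s (vx ?_ rfl) (vx ?_ rfl)⟩
        · show ((dS K : ℕ) : ZMod (NN K)) + ((z.val : ℕ) : ZMod (NN K)) = z + ((dS K : ℕ) : ZMod (NN K))
          rw [cast_val]; push_cast; ring
        · show ((0 : ℕ) : ZMod (NN K)) + ((z.val : ℕ) : ZMod (NN K)) = z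
          rw [cast_val]; push_cast; ring
      · refine ⟨.inl (⟨0, ⟨z.val - dS K, by have := ZMod.val_lt z; simp only [NN, dS] at *; omega⟩⟩), 1, mk2 (vx ?_ rfl) (vx ?_ rfl)⟩
        · show ((dS K : ℕ) : ZMod (NN K)) + ((z.val - dS K : ℕ) : ZMod (NN K)) = z
          rw [Nat.cast_sub (le_of_not_gt hw), cast_val]; push_cast; ring
        · show ((0 : ℕ) : ZMod (NN K)) + ((z.val - dS K : ℕ) : ZMod (NN K)) = z + ((dS K : ℕ) : ZMod (NN K))
          rw [Nat.cast_sub (le_of_not_gt hw), cast_val]; push_cast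
          linear_combination (-1 : ZMod (NN K)) * ds_add_ds K
    · by_cases hw : z.val < dS K
      · refine ⟨.inl (⟨1, ⟨z.val, hw⟩⟩), 1, mk2s (vx ?_ rfl) (vx ?_ rfl)⟩
        · show ((dS K : ℕ) : ZMod (NN K)) + ((z.val : ℕ) : ZMod (NN K)) = z + ((dS K : ℕ) : ZMod (NN K))
          rw [cast_val]; push_cast; ring
        · show ((0 : ℕ) : ZMod (NN K)) + ((z.val : ℕ) : ZMod (NN K)) = z
          rw [cast_val]; push_cast; ring
      · refine ⟨.inl (⟨1, ⟨z.val - dS K, by have := ZMod.val_lt z; simp only [NN, dS] at *; omega⟩⟩), 0, mk2s (vx ?_ rfl) (vx ?_ rfl)⟩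
        · show ((0 : ℕ) : ZMod (NN K)) + ((z.val - dS K : ℕ) : ZMod (NN K)) = z + ((dS K : ℕ) : ZMod (NN K))
          rw [Nat.cast_sub (le_of_not_gt hw), cast_val]; push_cast
          linear_combination (-1 : ZMod (NN K)) * ds_add_ds K
        · show ((dS K : ℕ) : ZMod (NN K)) + ((z.val - dS K : ℕ) : ZMod (NN K)) = z
          rw [Nat.cast_sub (le_of_not_gt hw), cast_val]; push_cast; ring
    · by_cases hw : z.val < dS K
      · refine ⟨.inl (⟨1, ⟨z.val, hw⟩⟩), 0, mk2 (vx ?_ rfl) (vx ?_ rfl)⟩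
        · show ((0 : ℕ) : ZMod (NN K)) + ((z.val : ℕ) : ZMod (NN K)) = z
          rw [cast_val]; push_cast; ring
        · show ((dS K : ℕ) : ZMod (NN K)) + ((z.val : ℕ) : ZMod (NN K)) = z + ((dS K : ℕ) : ZMod (NN K))
          rw [cast_val]; push_cast; ring
      · refine ⟨.inl (⟨1, ⟨z.val - dS K, by have := ZMod.val_lt z; simp only [NN, dS] at *; omega⟩⟩), 1, mk2 (vx ?_ rfl) (vx ?_ rfl)⟩
        · show ((dS K : ℕ) : ZMod (NN K)) + ((z.val - dS K : ℕ) : ZMod (NN K)) = z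
          rw [Nat.cast_sub (le_of_not_gt hw), cast_val]; push_cast; ring
        · show ((0 : ℕ) : ZMod (NN K)) + ((z.val - dS K : ℕ) : ZMod (NN K)) = z + ((dS K : ℕ) : ZMod (NN K))
          rw [Nat.cast_sub (le_of_not_gt hw), cast_val]; push_cast
          linear_combination (-1 : ZMod (NN K)) * ds_add_ds K
    · by_cases hw : z.val < dS K
      · refine ⟨.inl (⟨0, ⟨z.val, hw⟩⟩), 0, mk2 (vx ?_ rfl) (vx ?_ rfl)⟩
        · show ((0 : ℕ) : ZMod (NN K)) + ((z.val : ℕ) : ZMod (NN K)) = z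
          rw [cast_val]; push_cast; ring
        · show ((dS K : ℕ) : ZMod (NN K)) + ((z.val : ℕ) : ZMod (NN K)) = z + ((dS K : ℕ) : ZMod (NN K))
          rw [cast_val]; push_cast; ring
      · refine ⟨.inl (⟨0, ⟨z.val - dS K, by have := ZMod.val_lt z; simp only [NN, dS] at *; omega⟩⟩), 0, mk2s (vx ?_ rfl) (vx ?_ rfl)⟩
        · show ((0 : ℕ) : ZMod (NN K)) + ((z.val - dS K : ℕ) : ZMod (NN K)) = z + ((dS K : ℕ) : ZMod (NN K))
          rw [Nat.cast_sub (le_of_not_gt hw), cast_val]; push_cast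
          linear_combination (-1 : ZMod (NN K)) * ds_add_ds K
        · show ((dS K : ℕ) : ZMod (NN K)) + ((z.val - dS K : ℕ) : ZMod (NN K)) = z
          rw [Nat.cast_sub (le_of_not_gt hw), cast_val]; push_cast; ring

lemma surj_inf (K : ℕ) (z : ZMod (NN K)) (α β : Fin 2) :
    ∃ (idx : Idx K) (t : Fin 10),
      coveredOf K idx t = s((infc K, α), (embc K z, β)) := by
  fin_cases α <;> fin_cases β
  · refine ⟨.inr (.inl (⟨1, z⟩)), 0, mk2 rfl (vx ?_ rfl)⟩
    show ((0 : ℕ) : ZMod (NN K)) + z = z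
    push_cast; ring
  · refine ⟨.inr (.inl (⟨0, z⟩)), 1, mk2s (vx ?_ rfl) rfl⟩
    show ((0 : ℕ) : ZMod (NN K)) + z = z
    push_cast; ring
  · refine ⟨.inr (.inl (⟨0, z⟩)), 0, mk2 rfl (vx ?_ rfl)⟩
    show ((0 : ℕ) : ZMod (NN K)) + z = z
    push_cast; ring
  · refine ⟨.inr (.inl (⟨1, z⟩)), 1, mk2s (vx ?_ rfl) rfl⟩
    show ((0 : ℕ) : ZMod (NN K)) + z = z
    push_cast; ring

/-! ### Covering every non-`I` edge -/

lemma embc_cast_eq (K : ℕ) (c : Fin (nn K)) (h : c.val < NN K) :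
    embc K ((c.val : ZMod (NN K))) = c := by
  apply Fin.ext
  simp [embc, ZMod.val_natCast_of_lt h]

lemma embc_add_eq (K : ℕ) (c c' : Fin (nn K)) (h' : c'.val < NN K) (δ : ℕ)
    (hh : c.val + δ = c'.val ∨ c.val + δ = c'.val + NN K) :
    embc K ((c.val : ZMod (NN K)) + (δ : ZMod (NN K))) = c' := by
  have h2 : ((c.val : ZMod (NN K)) + (δ : ZMod (NN K))) = (c'.val : ZMod (NN K)) := by
    rcases hh with h1 | h1
    · rw [← Nat.cast_add, h1]
    · rw [← Nat.cast_add, h1, Nat.cast_add, ZMod.natCast_self, add_zero]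
  rw [h2]
  exact embc_cast_eq K c' h'

lemma exists_covered (K : ℕ) (e : Sym2 (HOPVertex (nn K))) (hd : ¬ e.IsDiag)
    (hI : ¬ IsIEdge e) : ∃ (idx : Idx K) (t : Fin 10), coveredOf K idx t = e := by
  induction e using Sym2.ind with
  | _ v w =>
  obtain ⟨c1, e1⟩ := v
  obtain ⟨c2, e2⟩ := w
  have hc : c1 ≠ c2 := by
    intro h
    subst h
    have he : e1 ≠ e2 := by
      intro h2
      exact hd (by rw [h2]; exact Sym2.mk_isDiag_iff.mpr rfl)
    apply hI
    have h12 : e2 = e1 + 1 := by fin_cases e1 <;> fin_cases e2 <;> simp_all <;> rfl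
    exact ⟨(c1, e1), by rw [h12]; rfl⟩
  have hlt1 : c1.val < nn K := c1.isLt
  have hlt2 : c2.val < nn K := c2.isLt
  have hne : c1.val ≠ c2.val := fun h => hc (Fin.ext h)
  by_cases hi1 : c1.val = NN K
  · have hc1 : c1 = infc K := Fin.ext hi1
    have hi2 : c2.val < NN K := by simp only [nn, NN] at *; omega
    obtain ⟨idx, t, h⟩ := surj_inf K ((c2.val : ZMod (NN K))) e1 e2
    refine ⟨idx, t, ?_⟩
    rw [h]
    exact mk2 (by rw [hc1]) (by rw [embc_cast_eq K c2 hi2])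
  · by_cases hi2 : c2.val = NN K
    · have hc2 : c2 = infc K := Fin.ext hi2
      have hi1' : c1.val < NN K := by simp only [nn, NN] at *; omega
      obtain ⟨idx, t, h⟩ := surj_inf K ((c1.val : ZMod (NN K))) e2 e1
      refine ⟨idx, t, ?_⟩
      rw [h]
      exact mk2s (by rw [hc2]) (by rw [embc_cast_eq K c1 hi1'])
    · have hv1 : c1.val < NN K := by simp only [nn, NN] at *; omega
      have hv2 : c2.val < NN K := by simp only [nn, NN] at *; omega
      have hNds : NN K = 2 * dS K := by simp only [NN, dS]; omega
      rcases lt_or_gt_of_ne hne with hlt | hlt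
      · by_cases hdle : c2.val - c1.val ≤ dS K
        · obtain ⟨idx, t, h⟩ := surj_fin K ((c1.val : ZMod (NN K))) (c2.val - c1.val)
            (by omega) hdle e1 e2
          refine ⟨idx, t, ?_⟩
          rw [h]
          exact mk2 (by rw [embc_cast_eq K c1 hv1])
            (by rw [embc_add_eq K c1 c2 hv2 _ (Or.inl (by omega))])
        · obtain ⟨idx, t, h⟩ := surj_fin K ((c2.val : ZMod (NN K))) (NN K - (c2.val - c1.val))
            (by omega) (by omega) e2 e1
          refine ⟨idx, t, ?_⟩
          rw [h]
          exact mk2s (by rw [embc_cast_eq K c2 hv2])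
            (by rw [embc_add_eq K c2 c1 hv1 _ (Or.inr (by omega))])
      · by_cases hdle : c1.val - c2.val ≤ dS K
        · obtain ⟨idx, t, h⟩ := surj_fin K ((c2.val : ZMod (NN K))) (c1.val - c2.val)
            (by omega) hdle e2 e1
          refine ⟨idx, t, ?_⟩
          rw [h]
          exact mk2s (by rw [embc_cast_eq K c2 hv2])
            (by rw [embc_add_eq K c2 c1 hv1 _ (Or.inl (by omega))])
        · obtain ⟨idx, t, h⟩ := surj_fin K ((c1.val : ZMod (NN K))) (NN K - (c1.val - c2.val))
            (by omega) (by omega) e1 e2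
          refine ⟨idx, t, ?_⟩
          rw [h]
          exact mk2 (by rw [embc_cast_eq K c1 hv1])
            (by rw [embc_add_eq K c1 c2 hv2 _ (Or.inr (by omega))])

/-! ### Counting -/

instance (K : ℕ) : Fintype (Idx K) :=
  inferInstanceAs (Fintype ((Fin 2 × Fin (dS K)) ⊕ (Fin 2 × ZMod (NN K)) ⊕
    (Fin (2*K+1) × Fin 2 × ZMod (NN K))))

lemma card_Idx (K : ℕ) : Fintype.card (Idx K) = (4*K+5) * NN K := by
  show Fintype.card ((Fin 2 × Fin (dS K)) ⊕ (Fin 2 × ZMod (NN K)) ⊕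
    (Fin (2*K+1) × Fin 2 × ZMod (NN K))) = (4*K+5) * NN K
  simp only [Fintype.card_sum, Fintype.card_prod, Fintype.card_fin, ZMod.card]
  simp only [NN, dS]
  ring

open Finset in
lemma card_E (m : ℕ) (hm : 1 ≤ m) :
    Nat.card {e : Sym2 (HOPVertex m) // ¬e.IsDiag ∧ ¬IsIEdge e} = 2 * m * (m-1) := by
  classical
  rw [Nat.card_eq_fintype_card, Fintype.card_subtype]
  have hinj : Function.Injective (fun i : Fin m => s(((i, 0) : HOPVertex m), (i, 1))) := by
    intro i i' h
    rw [Sym2.eq_iff] at h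
    rcases h with ⟨h1, _⟩ | ⟨h1, _⟩
    · exact congrArg Prod.fst h1
    · exfalso
      have h2 := congrArg Prod.snd h1
      simp at h2
  have himg : univ.filter (fun e : Sym2 (HOPVertex m) => IsIEdge e)
      = Finset.image (fun i : Fin m => s(((i, 0) : HOPVertex m), (i, 1))) univ := by
    ext e
    simp only [Finset.mem_filter, Finset.mem_univ, true_and, Finset.mem_image]
    constructor
    · rintro ⟨⟨c, ε⟩, rfl⟩
      refine ⟨c, ?_⟩
      fin_cases ε
      · rfl
      · exact Sym2.eq_swap
    · rintro ⟨i, rfl⟩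
      exact ⟨(i, 0), rfl⟩
  have hIcard : (univ.filter (fun e : Sym2 (HOPVertex m) => IsIEdge e)).card = m := by
    rw [himg, Finset.card_image_of_injective _ hinj, card_univ, Fintype.card_fin]
  have hsub : univ.filter (fun e : Sym2 (HOPVertex m) => IsIEdge e)
      ⊆ univ.filter (fun e : Sym2 (HOPVertex m) => ¬ e.IsDiag) := by
    intro e he
    simp only [Finset.mem_filter, Finset.mem_univ, true_and] at he ⊢
    obtain ⟨⟨cv, ev⟩, rfl⟩ := he
    rw [Sym2.mk_isDiag_iff]
    intro hvv
    have h2 := congrArg Prod.snd hvv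
    simp only [HOPspouse] at h2
    fin_cases ev <;> exact absurd h2 (by decide)
  have hfilter : univ.filter (fun e : Sym2 (HOPVertex m) => ¬e.IsDiag ∧ ¬IsIEdge e)
      = (univ.filter fun e : Sym2 (HOPVertex m) => ¬ e.IsDiag)
        \ (univ.filter fun e : Sym2 (HOPVertex m) => IsIEdge e) := by
    ext e
    simp only [Finset.mem_filter, Finset.mem_sdiff, Finset.mem_univ, true_and]
  rw [hfilter, Finset.card_sdiff_of_subset hsub, hIcard]
  have hnd : (univ.filter fun e : Sym2 (HOPVertex m) => ¬ e.IsDiag).card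
      = (2*m).choose 2 := by
    have h := Sym2.card_subtype_not_diag (α := HOPVertex m)
    rw [Fintype.card_subtype (fun z : Sym2 (HOPVertex m) => ¬ z.IsDiag)] at h
    rw [h]
    congr 1
    simp only [HOPVertex]
    rw [Fintype.card_prod, Fintype.card_fin, Fintype.card_fin]
    ring
  rw [hnd, Nat.choose_two_right]
  have h2 : 2*m*(2*m-1) = 2*(m*(2*m-1)) := by ring
  rw [h2, Nat.mul_div_cancel_left _ (by norm_num : 0 < 2)]
  obtain ⟨m', rfl⟩ : ∃ m', m = m' + 1 := ⟨m - 1, by omega⟩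
  have h3 : (m'+1)*(2*(m'+1)-1) = 2*(m'+1)*m' + (m'+1) := by
    have : 2*(m'+1)-1 = 2*m'+1 := by omega
    rw [this]; ring
  rw [h3, Nat.add_sub_cancel]
  have : m'+1-1 = m' := by omega
  rw [this]

/-! ### Assembly -/

lemma mem_edges_factorOf (K : ℕ) (idx : Idx K) (e : Sym2 (HOPVertex (nn K)))
    (hI : ¬ IsIEdge e) :
    e ∈ (factorOf K idx).edges ↔ ∃ t : Fin 10, e = coveredOf K idx t :=
  mem_edges_iff (by simp [nn]) (gOf K idx) (gOf_inj K idx) (yOf K idx) e hI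

theorem main (K : ℕ) : HOPSolution (nn K) (nn K - 10) 3 ![2,4,4] := by
  classical
  refine ⟨(4*K+5) * NN K, ?_, ?_⟩
  · have hsum : (∑ i, (![2,4,4] : Fin 3 → ℕ) i) = 10 := by simp [Fin.sum_univ_three]
    rw [hsum]
    simp only [nn, NN]
    have h1 : 20*K+25-1 = 20*K+24 := by omega
    rw [h1]; ring
  · let eqI : Idx K ≃ Fin ((4*K+5) * NN K) := Fintype.equivFinOfCardEq (card_Idx K)
    refine ⟨fun i => factorOf K (eqI.symm i), ?_⟩
    intro e hd hI
    have hcard : Fintype.card (Idx K × Fin 10)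
        = Fintype.card {e : Sym2 (HOPVertex (nn K)) // ¬e.IsDiag ∧ ¬IsIEdge e} := by
      rw [← Nat.card_eq_fintype_card
        (α := {e : Sym2 (HOPVertex (nn K)) // ¬e.IsDiag ∧ ¬IsIEdge e}),
        card_E (nn K) (by simp [nn]), Fintype.card_prod, card_Idx, Fintype.card_fin]
      simp only [nn, NN]
      have h1 : 20*K+25-1 = 20*K+24 := by omega
      rw [h1]; ring
    set Φ : Idx K × Fin 10 → {e : Sym2 (HOPVertex (nn K)) // ¬e.IsDiag ∧ ¬IsIEdge e} :=
      fun p => ⟨coveredOf K p.1 p.2,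
        covered_not_diag (gOf K p.1) (gOf_inj K p.1) (yOf K p.1) p.2,
        covered_not_IEdge (gOf K p.1) (gOf_inj K p.1) (yOf K p.1) p.2⟩ with hΦ
    have hsurj : Function.Surjective Φ := by
      rintro ⟨e', hd', hI'⟩
      obtain ⟨idx, t, h⟩ := exists_covered K e' hd' hI'
      exact ⟨(idx, t), Subtype.ext h⟩
    have hbij : Function.Bijective Φ :=
      (Fintype.bijective_iff_surjective_and_card Φ).mpr ⟨hsurj, hcard⟩
    obtain ⟨p, hp, hup⟩ := hbij.existsUnique ⟨e, hd, hI⟩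
    have hpe : coveredOf K p.1 p.2 = e := congrArg Subtype.val hp
    refine ⟨eqI p.1, ?_, ?_⟩
    · have hm := (mem_edges_factorOf K p.1 e hI).mpr ⟨p.2, hpe.symm⟩
      show e ∈ (factorOf K (eqI.symm (eqI p.1))).edges
      rw [Equiv.symm_apply_apply]
      exact hm
    · intro i' hi'
      obtain ⟨t', ht'⟩ := (mem_edges_factorOf K (eqI.symm i') e hI).mp hi'
      have hΦ2 : Φ (eqI.symm i', t') = ⟨e, hd, hI⟩ := Subtype.ext ht'.symm
      have h2 := hup _ hΦ2
      have h3 : eqI.symm i' = p.1 := congrArg Prod.fst h2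
      rw [← h3, Equiv.apply_symm_apply]

end HOP612

/-- Lemma 6.12: for `k ≥ 1`, `n = 20k + 5` and `s = n - 10`,
`HOP(2^⟨s⟩, 4, 8, 8)` has a solution. -/
theorem hop_C2_C4_C4_mod_five (k n s : ℕ) (hk : 1 ≤ k) (hn : n = 20 * k + 5)
    (hs : s = n - 10) :
    HOPSolution n s 3 ![2, 4, 4] := by
  subst hn hs
  obtain ⟨K, rfl⟩ : ∃ K, k = K + 1 := ⟨k - 1, by omega⟩
  have h1 : 20 * (K + 1) + 5 = HOP612.nn K := by
    show 20 * (K + 1) + 5 = 20 * K + 25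
    ring
  rw [h1]
  exact HOP612.main K
end
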